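/- arXiv:0905.2746 — 5 statements merged into one kernel-verified Lean document; each statement's English description precedes it below -/
import Mathlib

section
/- If ζ = q_0 q_1 ⋯ q_{m−1} is not a root of unity (that is, ζ^n ≠ 1 for every integer n ≥ 1), then the graded centre of the Ext algebra of Λ_q is trivial: Z_gr(E(Λ_q)) = K·1, the image of the structure map K → E(Λ_q). -/
open scoped BigOperators

noncomputable section

/-- Generators of the path algebra: trivial paths `e i`, arrows `a i : i → i+1`
and `abar i : i+1 → i`. -/
inductive Gen (m : ℕ) : Type
  | e : ZMod m → Gen m
  | a : ZMod m → Gen m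
  | abar : ZMod m → Gen m

/-- The free associative algebra on the generators. -/
abbrev FA (K : Type) [Field K] (m : ℕ) : Type := FreeAlgebra K (Gen m)

def Ee (K : Type) [Field K] (m : ℕ) (i : ZMod m) : FA K m := FreeAlgebra.ι K (Gen.e i)
def Aa (K : Type) [Field K] (m : ℕ) (i : ZMod m) : FA K m := FreeAlgebra.ι K (Gen.a i)
def Bb (K : Type) [Field K] (m : ℕ) (i : ZMod m) : FA K m := FreeAlgebra.ι K (Gen.abar i)

/-- The defining relations of the path algebra KQ. -/
inductive PathRel (K : Type) [Field K] (m : ℕ) [NeZero m] : FA K m → FA K m → Prop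
  | orth : ∀ i j : ZMod m, i ≠ j → PathRel K m (Ee K m i * Ee K m j) 0
  | idem : ∀ i : ZMod m, PathRel K m (Ee K m i * Ee K m i) (Ee K m i)
  | total : PathRel K m (∑ i : ZMod m, Ee K m i) 1
  | asrc : ∀ i : ZMod m, PathRel K m (Ee K m i * Aa K m i) (Aa K m i)
  | atgt : ∀ i : ZMod m, PathRel K m (Aa K m i * Ee K m (i + 1)) (Aa K m i)
  | bsrc : ∀ i : ZMod m, PathRel K m (Ee K m (i + 1) * Bb K m i) (Bb K m i)
  | btgt : ∀ i : ZMod m, PathRel K m (Bb K m i * Ee K m i) (Bb K m i)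

/-- The path algebra KQ. -/
abbrev PathAlg (K : Type) [Field K] (m : ℕ) [NeZero m] : Type := RingQuot (PathRel K m)

def pe (K : Type) [Field K] (m : ℕ) [NeZero m] (i : ZMod m) : PathAlg K m :=
  RingQuot.mkAlgHom K (PathRel K m) (Ee K m i)
def pa (K : Type) [Field K] (m : ℕ) [NeZero m] (i : ZMod m) : PathAlg K m :=
  RingQuot.mkAlgHom K (PathRel K m) (Aa K m i)
def pb (K : Type) [Field K] (m : ℕ) [NeZero m] (i : ZMod m) : PathAlg K m :=
  RingQuot.mkAlgHom K (PathRel K m) (Bb K m i)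

/-- The relations defining the Koszul dual (Ext algebra) of `Λ_q`:
`q_i⁻¹ a_i ā_i + ā_{i-1} a_{i-1} = 0`. -/
inductive ExtRel (K : Type) [Field K] (m : ℕ) [NeZero m] (q : ZMod m → K) :
    PathAlg K m → PathAlg K m → Prop
  | rel : ∀ i : ZMod m,
      ExtRel K m q ((q i)⁻¹ • (pa K m i * pb K m i) + pb K m (i - 1) * pa K m (i - 1)) 0

/-- The Ext algebra `E(Λ_q)`. -/
abbrev ExtAlg (K : Type) [Field K] (m : ℕ) [NeZero m] (q : ZMod m → K) : Type :=
  RingQuot (ExtRel K m q)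

def xe (K : Type) [Field K] (m : ℕ) [NeZero m] (q : ZMod m → K) (i : ZMod m) :
    ExtAlg K m q := RingQuot.mkAlgHom K (ExtRel K m q) (pe K m i)
def xa (K : Type) [Field K] (m : ℕ) [NeZero m] (q : ZMod m → K) (i : ZMod m) :
    ExtAlg K m q := RingQuot.mkAlgHom K (ExtRel K m q) (pa K m i)
def xb (K : Type) [Field K] (m : ℕ) [NeZero m] (q : ZMod m → K) (i : ZMod m) :
    ExtAlg K m q := RingQuot.mkAlgHom K (ExtRel K m q) (pb K m i)

/-- `γ_i^n`, the image of the path `a_i a_{i+1} ⋯ a_{i+n-1}` in `E(Λ_q)`. -/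
def gam (K : Type) [Field K] (m : ℕ) [NeZero m] (q : ZMod m → K) (i : ZMod m) :
    ℕ → ExtAlg K m q
  | 0 => xe K m q i
  | n + 1 => xa K m q i * gam K m q (i + 1) n

/-- `δ_i^n`, the image of the path `ā_{i+n-1} ⋯ ā_{i+1} ā_i` in `E(Λ_q)`. -/
def del (K : Type) [Field K] (m : ℕ) [NeZero m] (q : ZMod m → K) (i : ZMod m) :
    ℕ → ExtAlg K m q
  | 0 => xe K m q i
  | n + 1 => xb K m q (i + (n : ZMod m)) * del K m q i n

/-- Homogeneity of path-length degree `n` in `E(Λ_q)`: membership in the span of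
the (images of) paths of length `n`, i.e. of the monomials `γ_i^s δ_j^t` with `s + t = n`. -/
def Homog (K : Type) [Field K] (m : ℕ) [NeZero m] (q : ZMod m → K) (n : ℕ)
    (z : ExtAlg K m q) : Prop :=
  z ∈ Submodule.span K
    {x : ExtAlg K m q | ∃ (i j : ZMod m) (s t : ℕ), s + t = n ∧ x = gam K m q i s * del K m q j t}

/-- The graded centre of `E(Λ_q)`: the subalgebra generated by all homogeneous elements `z`
of degree `n` such that `z g = (-1)^{n n'} g z` for all homogeneous `g` of degree `n'`. -/
def ZGr (K : Type) [Field K] (m : ℕ) [NeZero m] (q : ZMod m → K) :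
    Subalgebra K (ExtAlg K m q) :=
  Algebra.adjoin K
    {z : ExtAlg K m q | ∃ n : ℕ, Homog K m q n z ∧
      ∀ (n' : ℕ) (g : ExtAlg K m q), Homog K m q n' g →
        z * g = ((-1 : K) ^ (n * n')) • (g * z)}

/-- The product `q_k q_{k+1} ⋯ q_{k+len-1}` (subscripts modulo `m`). -/
def qblock (K : Type) [Field K] (m : ℕ) [NeZero m] (q : ZMod m → K) (k len : ℕ) : K :=
  ∏ j ∈ Finset.range len, q ((k + j : ℕ) : ZMod m)

/-- The coefficient `∏_{k=1}^{i} (q_k ⋯ q_{k+len-1})⁻¹`. -/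
def wcoef (K : Type) [Field K] (m : ℕ) [NeZero m] (q : ZMod m → K) (i len : ℕ) : K :=
  ∏ k ∈ Finset.Icc 1 i, (qblock K m q k len)⁻¹

/-!
In the Ext algebra every path can be rewritten, up to a scalar, as a normal form `γ_i^s δ_j^t`
(all arrows `a` first), using `ā_k a_k = -q_{k+1}⁻¹ a_{k+1} ā_{k+1}`. Computing left
multiplication by the generators on normal forms gives a representation of `E(Λ_q)` on the free
module over normal forms.

Let `z` be homogeneous of degree `n` and graded-central, and let `C_k(s, t)` be the coefficient
of `γ_k^s δ^t` in `z e_k`. Commuting with `e_k` confines `z e_k` to paths starting at `k`.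
Graded commutation with `ā_k` gives `C_{k+1}(s, t) = ±(q_{k+1} ⋯ q_{k+s})⁻¹ C_k(s, t)`, and with
`a_k` a similar recursion with `t` factors, so going once around the cycle multiplies `C_k(s, t)`
by `±ζ^{-s}`, resp. `±ζ^{-t}`. Since `ζ` is not a root of unity, only `C_k(0, 0)` survives. It is
the coefficient of a path of length `0`, so it vanishes when `n > 0`, and it is independent of `k`
when `n = 0`; hence `z = c ∑ e_k = c · 1`.
-/

namespace ZMod

variable {m : ℕ} [NeZero m]

theorem forall_of_add_one {P : ZMod m → Prop} (i : ZMod m) (hi : P i)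
    (h : ∀ k, P k → P (k + 1)) (k : ZMod m) : P k := by
  have hnat : ∀ r : ℕ, P (i + r) := fun r => by
    induction r with
    | zero => simpa using hi
    | succ r ih => simpa [add_assoc] using h _ ih
  simpa using hnat (k - i).val

theorem eq_zero_of_forall_add_one_eq_mul {G₀ : Type*} [CommGroupWithZero G₀]
    {f e : ZMod m → G₀} (h : ∀ k, f (k + 1) = e k * f k) (he : ∏ k, e k ≠ 1) (k : ZMod m) :
    f k = 0 := by
  have hprod : (∏ k, e k) * ∏ k, f k = ∏ k, f k := by
    rw [← Finset.prod_mul_distrib, ← Equiv.prod_comp (Equiv.addRight (1 : ZMod m)) f]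
    exact Finset.prod_congr rfl fun k _ => (h k).symm
  have hzero : ∏ k, f k = 0 := by
    by_contra hne
    exact he ((mul_eq_right₀ hne).mp hprod)
  obtain ⟨i, -, hi⟩ := Finset.prod_eq_zero_iff.mp hzero
  exact forall_of_add_one (P := (f · = 0)) i hi (fun k hk => by rw [h, hk, mul_zero]) k

end ZMod

theorem neg_one_pow_mul_inv_pow_ne_one {F : Type*} [Field F] {ζ : F}
    (hζ : ∀ n : ℕ, 1 ≤ n → ζ ^ n ≠ 1) {s : ℕ} (hs : s ≠ 0) (a : ℕ) :
    (-1) ^ a * (ζ ^ s)⁻¹ ≠ 1 := by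
  intro h
  have hζs : ζ ^ s = (-1) ^ a := inv_injective (eq_inv_of_mul_eq_one_right h)
  exact hζ (s * 2) (by omega) (by rw [pow_mul, hζs, ← pow_mul, Even.neg_one_pow ⟨a, by ring⟩])

namespace ExtAlg

open Finsupp

variable {K : Type} [Field K] {m : ℕ} {q : ZMod m → K}

section Relations

variable [NeZero m]

theorem mkAlgHom_mkAlgHom_eq_of_pathRel {x y : FA K m} (h : PathRel K m x y) :
    RingQuot.mkAlgHom K (ExtRel K m q) (RingQuot.mkAlgHom K (PathRel K m) x) =
      RingQuot.mkAlgHom K (ExtRel K m q) (RingQuot.mkAlgHom K (PathRel K m) y) := by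
  rw [RingQuot.mkAlgHom_rel K h]

theorem xe_mul_xe_of_ne {i j : ZMod m} (h : i ≠ j) : xe K m q i * xe K m q j = 0 := by
  simpa [xe, pe] using mkAlgHom_mkAlgHom_eq_of_pathRel (q := q) (PathRel.orth i j h)

theorem xe_mul_xe (i : ZMod m) : xe K m q i * xe K m q i = xe K m q i := by
  simpa [xe, pe] using mkAlgHom_mkAlgHom_eq_of_pathRel (q := q) (PathRel.idem i)

theorem sum_xe : ∑ i, xe K m q i = 1 := by
  simpa [xe, pe] using mkAlgHom_mkAlgHom_eq_of_pathRel (q := q) (PathRel.total (K := K) (m := m))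

theorem xa_mul_xe (i : ZMod m) : xa K m q i * xe K m q (i + 1) = xa K m q i := by
  simpa [xe, xa, pe, pa] using mkAlgHom_mkAlgHom_eq_of_pathRel (q := q) (PathRel.atgt i)

theorem xe_mul_xb (i : ZMod m) : xe K m q (i + 1) * xb K m q i = xb K m q i := by
  simpa [xe, xb, pe, pb] using mkAlgHom_mkAlgHom_eq_of_pathRel (q := q) (PathRel.bsrc i)

theorem xb_mul_xe (i : ZMod m) : xb K m q i * xe K m q i = xb K m q i := by
  simpa [xe, xb, pe, pb] using mkAlgHom_mkAlgHom_eq_of_pathRel (q := q) (PathRel.btgt i)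

@[simp] theorem gam_zero (i : ZMod m) : gam K m q i 0 = xe K m q i := rfl

theorem gam_succ (i : ZMod m) (s : ℕ) :
    gam K m q i (s + 1) = xa K m q i * gam K m q (i + 1) s := rfl

@[simp] theorem del_zero (j : ZMod m) : del K m q j 0 = xe K m q j := rfl

theorem del_succ (j : ZMod m) (t : ℕ) :
    del K m q j (t + 1) = xb K m q (j + t) * del K m q j t := rfl

theorem gam_one (i : ZMod m) : gam K m q i 1 = xa K m q i := by
  rw [gam_succ, gam_zero, xa_mul_xe]

theorem del_one (j : ZMod m) : del K m q j 1 = xb K m q j := by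
  simp [del_succ, xb_mul_xe]

theorem gam_mul_xe (i : ZMod m) (s : ℕ) :
    gam K m q i s * xe K m q (i + s) = gam K m q i s := by
  induction s generalizing i with
  | zero => simpa using xe_mul_xe i
  | succ s ih =>
    rw [gam_succ, mul_assoc, Nat.cast_succ, add_comm (s : ZMod m), ← add_assoc, ih]

theorem xe_mul_del (j : ZMod m) (t : ℕ) :
    xe K m q (j + t) * del K m q j t = del K m q j t := by
  cases t with
  | zero => simpa using xe_mul_xe j
  | succ t => rw [del_succ, ← mul_assoc, Nat.cast_succ, ← add_assoc, xe_mul_xb]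

theorem gam_mul_del_of_ne {i j : ZMod m} {s t : ℕ} (h : i + s ≠ j + t) :
    gam K m q i s * del K m q j t = 0 := by
  rw [← gam_mul_xe, ← xe_mul_del, mul_assoc, ← mul_assoc (xe K m q _), xe_mul_xe_of_ne h,
    zero_mul, mul_zero]

theorem homog_xe (k : ZMod m) : Homog K m q 0 (xe K m q k) :=
  Submodule.subset_span ⟨k, k, 0, 0, rfl, by simp [xe_mul_xe]⟩

theorem homog_xa (k : ZMod m) : Homog K m q 1 (xa K m q k) :=
  Submodule.subset_span ⟨k, k + 1, 1, 0, rfl, by rw [gam_one, del_zero, xa_mul_xe]⟩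

theorem homog_xb (k : ZMod m) : Homog K m q 1 (xb K m q k) :=
  Submodule.subset_span ⟨k + 1, k, 0, 1, rfl, by rw [gam_zero, del_one, xe_mul_xb]⟩

end Relations

/-- The scalar in `ā_k γ_k^s = swapCoeff q k s • γ_{k+1}^s ā_{k+s}`: the relation
`ā_k a_k = -q_{k+1}⁻¹ a_{k+1} ā_{k+1}` is applied `s` times. -/
def swapCoeff (q : ZMod m → K) (k : ZMod m) (s : ℕ) : K :=
  (-1) ^ s * (∏ l ∈ Finset.range s, q (k + 1 + l))⁻¹

@[simp] theorem swapCoeff_zero (k : ZMod m) : swapCoeff q k 0 = 1 := by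
  simp [swapCoeff]

theorem swapCoeff_succ (k : ZMod m) (s : ℕ) :
    swapCoeff q k (s + 1) = -(q (k + 1))⁻¹ * swapCoeff q (k + 1) s := by
  simp only [swapCoeff, Finset.prod_range_succ', Nat.cast_zero, add_zero, Nat.cast_succ, mul_inv,
    pow_succ]
  ring_nf

theorem prod_range_swapCoeff_one (j : ZMod m) (t : ℕ) :
    ∏ r ∈ Finset.range t, swapCoeff q (j + r) 1 = swapCoeff q j t := by
  simp only [swapCoeff, pow_one, Finset.prod_range_one, Nat.cast_zero, add_zero]
  rw [Finset.prod_mul_distrib, Finset.prod_const, Finset.card_range, Finset.prod_inv_distrib]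
  simp only [add_right_comm j]

theorem prod_swapCoeff [NeZero m] (s : ℕ) :
    ∏ k, swapCoeff q k s = (-1) ^ (s * m) * ((∏ i, q i) ^ s)⁻¹ := by
  have hshift (l : ℕ) : ∏ k : ZMod m, q (k + 1 + l) = ∏ i, q i :=
    Fintype.prod_equiv (Equiv.addRight (1 + l : ZMod m)) _ q fun k => by simp [add_assoc]
  simp only [swapCoeff, Finset.prod_mul_distrib, Finset.prod_const, Finset.card_univ, ZMod.card,
    ← pow_mul, Finset.prod_inv_distrib]
  rw [Finset.prod_comm, Finset.prod_congr rfl fun l _ => hshift l, Finset.prod_const,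
    Finset.card_range]

theorem prod_neg_one_pow_mul_swapCoeff_ne_one [NeZero m]
    (hζ : ∀ n : ℕ, 1 ≤ n → (∏ i, q i) ^ n ≠ 1) (n : ℕ) (c : ZMod m) {s : ℕ} (hs : s ≠ 0) :
    ∏ k, (-1) ^ n * swapCoeff q (k + c) s ≠ 1 := by
  rw [Finset.prod_mul_distrib, Fintype.prod_equiv (Equiv.addRight c)
      (fun k => swapCoeff q (k + c) s) (swapCoeff q · s) fun _ => rfl,
    prod_swapCoeff, Finset.prod_const, ← mul_assoc, ← pow_mul, ← pow_add]
  exact neg_one_pow_mul_inv_pow_ne_one hζ hs _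

/-- The basis vector `(i, s, t)` stands for the normal-form path `γ_i^s δ_{i+s-t}^t`: `s` arrows
forward from `i`, then `t` arrows back. -/
abbrev PathSpace (K : Type) [Field K] (m : ℕ) : Type := (ZMod m × ℕ × ℕ) →₀ K

section Operators

variable (K q)

def leftE (k : ZMod m) : Module.End K (PathSpace K m) :=
  lsum K fun b => if b.1 = k then lsingle b else 0

def leftA (k : ZMod m) : Module.End K (PathSpace K m) :=
  lsum K fun b => if b.1 = k + 1 then lsingle (k, b.2.1 + 1, b.2.2) else 0

def leftB (k : ZMod m) : Module.End K (PathSpace K m) :=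
  lsum K fun b => if b.1 = k then swapCoeff q k b.2.1 • lsingle (k + 1, b.2.1, b.2.2 + 1) else 0

/-- Right multiplication by the arrow `a` leaving the end point of the path; it has to be moved
past the `t` trailing arrows `ā`. -/
def rightA : Module.End K (PathSpace K m) :=
  lsum K fun b => swapCoeff q (b.1 + b.2.1 - b.2.2) b.2.2 • lsingle (b.1, b.2.1 + 1, b.2.2)

def rightB : Module.End K (PathSpace K m) :=
  lsum K fun b => lsingle (b.1, b.2.1, b.2.2 + 1)

end Operators

@[simp] theorem leftE_single (k i : ZMod m) (s t : ℕ) (c : K) :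
    leftE K k (single (i, s, t) c) = if i = k then single (i, s, t) c else 0 := by
  rw [leftE, lsum_single]
  split_ifs <;> simp

@[simp] theorem leftA_single (k i : ZMod m) (s t : ℕ) (c : K) :
    leftA K k (single (i, s, t) c) = if i = k + 1 then single (k, s + 1, t) c else 0 := by
  rw [leftA, lsum_single]
  split_ifs <;> simp

@[simp] theorem leftB_single (k i : ZMod m) (s t : ℕ) (c : K) :
    leftB K q k (single (i, s, t) c) =
      if i = k then swapCoeff q k s • single (k + 1, s, t + 1) c else 0 := by
  rw [leftB, lsum_single]
  split_ifs <;> simp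

@[simp] theorem rightA_single (i : ZMod m) (s t : ℕ) (c : K) :
    rightA K q (single (i, s, t) c) = swapCoeff q (i + s - t) t • single (i, s + 1, t) c := by
  simp [rightA]

@[simp] theorem rightB_single (i : ZMod m) (s t : ℕ) (c : K) :
    rightB K (single (i, s, t) c) = single (i, s, t + 1) c := by
  simp [rightB]

theorem leftE_apply_of_ne {k i : ZMod m} (h : i ≠ k) (x : PathSpace K m) (s t : ℕ) :
    leftE K k x (i, s, t) = 0 := by
  induction x using Finsupp.induction_linear with
  | zero => simp
  | add f g hf hg => simp [hf, hg]
  | single b c =>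
    obtain ⟨i', s', t'⟩ := b
    simp only [leftE_single]
    split_ifs <;> simp_all

theorem leftA_apply (k : ZMod m) (x : PathSpace K m) (s t : ℕ) :
    leftA K k x (k, s + 1, t) = x (k + 1, s, t) := by
  induction x using Finsupp.induction_linear with
  | zero => simp
  | add f g hf hg => simp [hf, hg]
  | single b c =>
    obtain ⟨i', s', t'⟩ := b
    simp only [leftA_single, single_apply]
    split_ifs <;> simp_all

theorem leftB_apply (k : ZMod m) (x : PathSpace K m) (s t : ℕ) :
    leftB K q k x (k + 1, s, t + 1) = swapCoeff q k s * x (k, s, t) := by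
  induction x using Finsupp.induction_linear with
  | zero => simp
  | add f g hf hg => simp [hf, hg, mul_add]
  | single b c =>
    obtain ⟨i', s', t'⟩ := b
    simp only [leftB_single, single_apply]
    split_ifs <;> simp_all

theorem rightA_apply (x : PathSpace K m) (k : ZMod m) (s t : ℕ) :
    rightA K q x (k, s + 1, t) = swapCoeff q (k + s - t) t * x (k, s, t) := by
  induction x using Finsupp.induction_linear with
  | zero => simp
  | add f g hf hg => simp [hf, hg, mul_add]
  | single b c =>
    obtain ⟨i', s', t'⟩ := b
    simp only [rightA_single, Finsupp.smul_apply, single_apply]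
    split_ifs <;> simp_all

theorem rightB_apply (x : PathSpace K m) (i : ZMod m) (s t : ℕ) :
    rightB K x (i, s, t + 1) = x (i, s, t) := by
  induction x using Finsupp.induction_linear with
  | zero => simp
  | add f g hf hg => simp [hf, hg]
  | single b c =>
    obtain ⟨i', s', t'⟩ := b
    simp only [rightB_single, single_apply]
    split_ifs <;> simp_all

theorem leftE_mul_leftE_of_ne {i j : ZMod m} (h : i ≠ j) : leftE K i * leftE K j = 0 := by
  refine lhom_ext fun ⟨i', s', t'⟩ c => ?_
  by_cases hi : i' = j <;> simp [hi, h.symm]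

theorem leftE_mul_leftE (i : ZMod m) : leftE K i * leftE K i = leftE K i := by
  refine lhom_ext fun ⟨i', s', t'⟩ c => ?_
  by_cases hi : i' = i <;> simp [hi]

theorem sum_leftE [NeZero m] : ∑ i : ZMod m, leftE K i = 1 := by
  refine lhom_ext fun ⟨i', s', t'⟩ c => ?_
  simp

theorem leftA_mul_leftE (i : ZMod m) : leftA K i * leftE K (i + 1) = leftA K i := by
  refine lhom_ext fun ⟨i', s', t'⟩ c => ?_
  by_cases hi : i' = i + 1 <;> simp [hi]

theorem leftE_mul_leftA (i : ZMod m) : leftE K i * leftA K i = leftA K i := by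
  refine lhom_ext fun ⟨i', s', t'⟩ c => ?_
  by_cases hi : i' = i + 1 <;> simp [hi]

theorem leftB_mul_leftE (i : ZMod m) : leftB K q i * leftE K i = leftB K q i := by
  refine lhom_ext fun ⟨i', s', t'⟩ c => ?_
  by_cases hi : i' = i <;> simp [hi]

-- `single_mul` (for the pointwise product of finsupps) is a simp lemma that would split scalars.
theorem leftE_mul_leftB (i : ZMod m) : leftE K (i + 1) * leftB K q i = leftB K q i := by
  refine lhom_ext fun ⟨i', s', t'⟩ c => ?_
  by_cases hi : i' = i <;> simp [hi, -single_mul]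

theorem inv_smul_leftA_mul_leftB_add_leftB_mul_leftA (i : ZMod m) :
    (q i)⁻¹ • (leftA K i * leftB K q i) + leftB K q (i - 1) * leftA K (i - 1) = 0 := by
  refine lhom_ext fun ⟨i', s', t'⟩ c => ?_
  by_cases hi : i' = i
  · subst hi
    simp [swapCoeff_succ, mul_assoc, -single_mul]
  · simp [hi, sub_add_cancel]

section Representation

variable [NeZero m]

variable (K q) in
def genEnd : Gen m → Module.End K (PathSpace K m)
  | .e i => leftE K i
  | .a i => leftA K i
  | .abar i => leftB K q i

variable (q) in
/-- `E(Λ_q)` acting on normal forms by left multiplication. -/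
def extRep : ExtAlg K m q →ₐ[K] Module.End K (PathSpace K m) :=
  RingQuot.liftAlgHom K ⟨RingQuot.liftAlgHom K ⟨FreeAlgebra.lift K (genEnd K q), by
    rintro _ _ (⟨i, j, h⟩ | i | _ | i | i | i | i) <;>
      simp [Ee, Aa, Bb, genEnd, leftE_mul_leftE_of_ne, leftE_mul_leftE, sum_leftE,
        leftE_mul_leftA, leftA_mul_leftE, leftE_mul_leftB, leftB_mul_leftE, *]⟩, by
    rintro _ _ ⟨i⟩
    simpa [pa, pb, Aa, Bb, genEnd] using inv_smul_leftA_mul_leftB_add_leftB_mul_leftA (q := q) i⟩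

@[simp] theorem extRep_xe (i : ZMod m) : extRep q (xe K m q i) = leftE K i := by
  simp [extRep, xe, pe, Ee, genEnd]

@[simp] theorem extRep_xa (i : ZMod m) : extRep q (xa K m q i) = leftA K i := by
  simp [extRep, xa, pa, Aa, genEnd]

@[simp] theorem extRep_xb (i : ZMod m) : extRep q (xb K m q i) = leftB K q i := by
  simp [extRep, xb, pb, Bb, genEnd]

theorem extRep_gam_single (i : ZMod m) (s : ℕ) (u : ZMod m) (a b : ℕ) (c : K) :
    extRep q (gam K m q i s) (single (u, a, b) c) =
      if u = i + s then single (i, s + a, b) c else 0 := by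
  induction s generalizing i with
  | zero => by_cases h : u = i <;> simp [h]
  | succ s ih =>
    rw [gam_succ, map_mul, Module.End.mul_apply, ih, Nat.cast_succ, add_comm (s : ZMod m),
      ← add_assoc]
    by_cases h : u = i + 1 + s
    · rw [if_pos h, if_pos h, extRep_xa, leftA_single, if_pos rfl, Nat.add_right_comm]
    · rw [if_neg h, if_neg h, map_zero]

theorem extRep_del_single (j : ZMod m) (t : ℕ) (u : ZMod m) (a b : ℕ) (c : K) :
    extRep q (del K m q j t) (single (u, a, b) c) =
      if u = j then (∏ r ∈ Finset.range t, swapCoeff q (j + r) a) •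
        single (j + t, a, b + t) c else 0 := by
  induction t with
  | zero => by_cases h : u = j <;> simp [h]
  | succ t ih =>
    rw [del_succ, map_mul, Module.End.mul_apply, ih]
    by_cases h : u = j
    · rw [if_pos h, if_pos h, map_smul, extRep_xb, leftB_single, if_pos rfl, smul_smul,
        Finset.prod_range_succ, Nat.cast_succ, add_assoc, ← add_assoc b]
    · rw [if_neg h, if_neg h, map_zero]

theorem extRep_gam_mul_del_single (i j : ZMod m) (s t : ℕ) (u : ZMod m) (a b : ℕ) (c : K) :
    extRep q (gam K m q i s * del K m q j t) (single (u, a, b) c) =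
      if u = j ∧ j + t = i + s then (∏ r ∈ Finset.range t, swapCoeff q (j + r) a) •
        single (i, s + a, b + t) c else 0 := by
  rw [map_mul, Module.End.mul_apply, extRep_del_single]
  by_cases hu : u = j
  · by_cases hj : j + t = i + s
    · rw [if_pos hu, if_pos ⟨hu, hj⟩, map_smul, extRep_gam_single, if_pos hj]
    · rw [if_pos hu, if_neg (hj ·.2), map_smul, extRep_gam_single, if_neg hj, smul_zero]
  · rw [if_neg hu, if_neg (hu ·.1), map_zero]

variable (q) in
def pathEval : PathSpace K m →ₗ[K] ExtAlg K m q :=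
  lsum K fun b => LinearMap.toSpanSingleton K _
    (gam K m q b.1 b.2.1 * del K m q (b.1 + b.2.1 - b.2.2) b.2.2)

theorem pathEval_single (i : ZMod m) (s t : ℕ) (c : K) :
    pathEval q (single (i, s, t) c) = c • (gam K m q i s * del K m q (i + s - t) t) := by
  simp [pathEval]

/-- The coordinates of `z e_k`. -/
def coord (z : ExtAlg K m q) (k : ZMod m) : PathSpace K m := extRep q z (single (k, 0, 0) 1)

end Representation

end ExtAlg

namespace Homog

open ExtAlg Finsupp

variable {K : Type} [Field K] {m : ℕ} [NeZero m] {q : ZMod m → K} {n : ℕ} {z : ExtAlg K m q}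

theorem linearMap_apply_eq {M : Type*} [AddCommMonoid M] [Module K M]
    (hz : Homog K m q n z) {f g : ExtAlg K m q →ₗ[K] M}
    (h : ∀ i j s t, s + t = n →
      f (gam K m q i s * del K m q j t) = g (gam K m q i s * del K m q j t)) :
    f z = g z :=
  LinearMap.eqOn_span (by rintro _ ⟨i, j, s, t, hst, rfl⟩; exact h i j s t hst) hz

theorem extRep_single_zero_one (hz : Homog K m q n z) (k : ZMod m) :
    extRep q z (single (k, 0, 1) 1) = rightB K (coord z k) :=
  hz.linearMap_apply_eq (f := LinearMap.applyₗ (single (k, 0, 1) 1) ∘ₗ (extRep q).toLinearMap)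
    (g := rightB K ∘ₗ LinearMap.applyₗ (single (k, 0, 0) 1) ∘ₗ (extRep q).toLinearMap)
    fun i j s t _ => by
      simp only [LinearMap.comp_apply, AlgHom.toLinearMap_apply, LinearMap.applyₗ_apply_apply,
        extRep_gam_mul_del_single]
      split_ifs <;> simp [add_comm 1]

theorem extRep_single_one_zero (hz : Homog K m q n z) (k : ZMod m) :
    extRep q z (single (k, 1, 0) 1) = rightA K q (coord z k) :=
  hz.linearMap_apply_eq (f := LinearMap.applyₗ (single (k, 1, 0) 1) ∘ₗ (extRep q).toLinearMap)
    (g := rightA K q ∘ₗ LinearMap.applyₗ (single (k, 0, 0) 1) ∘ₗ (extRep q).toLinearMap)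
    fun i j s t _ => by
      simp only [LinearMap.comp_apply, AlgHom.toLinearMap_apply, LinearMap.applyₗ_apply_apply,
        extRep_gam_mul_del_single]
      split_ifs with h
      · have hk : i + s - t = k := by rw [h.1, ← h.2, add_sub_cancel_right]
        simp [hk, h.1, prod_range_swapCoeff_one]
      · simp

theorem coord_apply_self_zero_zero_eq_zero (hz : Homog K m q n z) (hn : n ≠ 0) (k : ZMod m) :
    coord z k (k, 0, 0) = 0 :=
  hz.linearMap_apply_eq (f := lapply (k, 0, 0) ∘ₗ LinearMap.applyₗ (single (k, 0, 0) 1) ∘ₗ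
      (extRep q).toLinearMap) (g := 0) fun i j s t hst => by
    simp only [LinearMap.comp_apply, AlgHom.toLinearMap_apply, LinearMap.applyₗ_apply_apply,
      extRep_gam_mul_del_single, lapply_apply, LinearMap.zero_apply]
    split_ifs
    · rw [Finsupp.smul_apply, single_apply, if_neg (by simp only [Prod.mk.injEq]; omega),
        smul_zero]
    · simp

theorem pathEval_sum_coord (hz : Homog K m q n z) : pathEval q (∑ k, coord z k) = z := by
  simpa [coord] using hz.linearMap_apply_eq (g := LinearMap.id)
    (f := pathEval q ∘ₗ (∑ k, LinearMap.applyₗ (single (k, 0, 0) 1)) ∘ₗ (extRep q).toLinearMap)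
    fun i j s t _ => by
      simp only [LinearMap.comp_apply, AlgHom.toLinearMap_apply, LinearMap.coe_sum,
        Finset.sum_apply, LinearMap.applyₗ_apply_apply, extRep_gam_mul_del_single,
        LinearMap.id_apply]
      by_cases h : j + t = i + s
      · have hj : i + s - t = j := by rw [← h, add_sub_cancel_right]
        simp [h, pathEval_single, hj]
      · simp [h, gam_mul_del_of_ne (Ne.symm h)]

end Homog

def IsGradedCentral {K : Type} [Field K] {m : ℕ} [NeZero m] {q : ZMod m → K} (n : ℕ)
    (z : ExtAlg K m q) : Prop :=
  Homog K m q n z ∧ ∀ (n' : ℕ) (g : ExtAlg K m q), Homog K m q n' g →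
    z * g = ((-1 : K) ^ (n * n')) • (g * z)

namespace IsGradedCentral

open ExtAlg Finsupp

variable {K : Type} [Field K] {m : ℕ} [NeZero m] {q : ZMod m → K} {n : ℕ} {z : ExtAlg K m q}

theorem coord_apply_of_ne (hz : IsGradedCentral n z) {i k : ZMod m} (h : i ≠ k) (s t : ℕ) :
    coord z k (i, s, t) = 0 := by
  have hcomm := congrArg (extRep q · (single (k, 0, 0) 1)) (hz.2 0 _ (homog_xe k))
  simp only [map_mul, Module.End.mul_apply, extRep_xe, leftE_single, if_pos, mul_zero, pow_zero,
    one_smul] at hcomm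
  rw [coord, hcomm, leftE_apply_of_ne h]

theorem coord_add_one_apply_of_commute_xb (hz : IsGradedCentral n z) (k : ZMod m) (s t : ℕ) :
    coord z (k + 1) (k + 1, s, t) = (-1) ^ n * swapCoeff q k s * coord z k (k, s, t) := by
  have hcomm := congrArg (extRep q · (single (k, 0, 0) 1) (k + 1, s, t + 1))
    (hz.2 1 _ (homog_xb k))
  simp only [map_mul, map_smul, Module.End.mul_apply, LinearMap.smul_apply, extRep_xb,
    leftB_single, if_pos, swapCoeff_zero, one_smul, hz.1.extRep_single_zero_one, mul_one,
    rightB_apply, Finsupp.smul_apply, smul_eq_mul] at hcomm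
  rw [hcomm, ← coord, leftB_apply, mul_assoc]

theorem coord_add_one_apply_of_commute_xa (hz : IsGradedCentral n z) (k : ZMod m) (s t : ℕ) :
    coord z (k + 1) (k + 1, s, t) =
      (-1) ^ n * swapCoeff q (k + s - t) t * coord z k (k, s, t) := by
  have hcomm := congrArg (extRep q · (single (k + 1, 0, 0) 1) (k, s + 1, t))
    (hz.2 1 _ (homog_xa k))
  simp only [map_mul, map_smul, Module.End.mul_apply, LinearMap.smul_apply, extRep_xa,
    leftA_single, if_pos, hz.1.extRep_single_one_zero, mul_one,
    rightA_apply, Finsupp.smul_apply, smul_eq_mul] at hcomm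
  rw [← coord, leftA_apply] at hcomm
  rw [mul_assoc, hcomm, ← mul_assoc, ← pow_add, Even.neg_one_pow ⟨n, rfl⟩, one_mul]

theorem coord_apply_self_eq_zero (hz : IsGradedCentral n z)
    (hζ : ∀ n : ℕ, 1 ≤ n → (∏ i, q i) ^ n ≠ 1) (k : ZMod m) {s t : ℕ} (hst : s ≠ 0 ∨ t ≠ 0) :
    coord z k (k, s, t) = 0 := by
  rcases hst with hs | ht
  · refine ZMod.eq_zero_of_forall_add_one_eq_mul (f := fun k => coord z k (k, s, t))
      (fun k => hz.coord_add_one_apply_of_commute_xb k s t) ?_ k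
    simpa using prod_neg_one_pow_mul_swapCoeff_ne_one hζ n 0 hs
  · refine ZMod.eq_zero_of_forall_add_one_eq_mul (f := fun k => coord z k (k, s, t))
      (fun k => hz.coord_add_one_apply_of_commute_xa k s t) ?_ k
    simpa [add_sub_assoc] using prod_neg_one_pow_mul_swapCoeff_ne_one hζ n (s - t) ht

theorem coord_eq_single (hz : IsGradedCentral n z) (hζ : ∀ n : ℕ, 1 ≤ n → (∏ i, q i) ^ n ≠ 1)
    (k : ZMod m) : coord z k = single (k, 0, 0) (coord z k (k, 0, 0)) := by
  ext ⟨i, s, t⟩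
  by_cases hi : i = k
  · subst hi
    by_cases hst : s = 0 ∧ t = 0
    · simp [hst]
    · rw [hz.coord_apply_self_eq_zero hζ i (by tauto), single_eq_of_ne (by simp; tauto)]
  · rw [hz.coord_apply_of_ne hi, single_eq_of_ne (by simp [hi])]

theorem exists_coord_eq_single (hz : IsGradedCentral n z)
    (hζ : ∀ n : ℕ, 1 ≤ n → (∏ i, q i) ^ n ≠ 1) :
    ∃ c : K, ∀ k, coord z k = single (k, 0, 0) c := by
  by_cases hn : n = 0
  · refine ⟨coord z 0 (0, 0, 0), fun k => ?_⟩
    have hconst := ZMod.forall_of_add_one (P := fun k => coord z k (k, 0, 0) = coord z 0 (0, 0, 0))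
      0 rfl (fun k hk => by rw [hz.coord_add_one_apply_of_commute_xb, hn, hk]; simp) k
    rw [hz.coord_eq_single hζ, hconst]
  · exact ⟨0, fun k => by rw [hz.coord_eq_single hζ, hz.1.coord_apply_self_zero_zero_eq_zero hn]⟩

theorem mem_bot (hz : IsGradedCentral n z) (hζ : ∀ n : ℕ, 1 ≤ n → (∏ i, q i) ^ n ≠ 1) :
    z ∈ (⊥ : Subalgebra K (ExtAlg K m q)) := by
  obtain ⟨c, hc⟩ := hz.exists_coord_eq_single hζ
  refine Algebra.mem_bot.mpr ⟨c, ?_⟩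
  rw [← hz.1.pathEval_sum_coord, Finset.sum_congr rfl fun k _ => hc k, map_sum,
    Algebra.algebraMap_eq_smul_one, ← sum_xe, Finset.smul_sum]
  simp [pathEval_single, xe_mul_xe]

end IsGradedCentral

theorem graded_centre_trivial_of_not_root_of_unity_general
    (K : Type) [Field K] (m : ℕ) [NeZero m]
    (q : ZMod m → K)
    (hζ : ∀ n : ℕ, 1 ≤ n → (∏ i : ZMod m, q i) ^ n ≠ 1) :
    ZGr K m q = ⊥ := by
  refine le_bot_iff.mp (Algebra.adjoin_le ?_)
  rintro z ⟨n, hz⟩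
  exact IsGradedCentral.mem_bot hz hζ

/-- If `ζ = q_0 ⋯ q_{m-1}` is not a root of unity, then the graded centre of
the Ext algebra of `Λ_q` is trivial: `Z_gr(E(Λ_q)) = K·1`, i.e. the bottom subalgebra
(the image of the structure map `K → E(Λ_q)`). -/
theorem graded_centre_trivial_of_not_root_of_unity
    (K : Type) [Field K] (m : ℕ) [NeZero m] (hm : 1 ≤ m)
    (q : ZMod m → K) (hq : ∀ i, q i ≠ 0)
    (hζ : ∀ n : ℕ, 1 ≤ n → (∏ i : ZMod m, q i) ^ n ≠ 1) :
    ZGr K m q = ⊥ :=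
  graded_centre_trivial_of_not_root_of_unity_general K m q hζ
end
end

section
/- Let m ≥ 4 and b_1, t ∈ K with t b_1 ≠ 1, and take b_2 = 0. Then soc(Λ̃) equals the K-span of {a_0 ā_0, a_1 ā_1, …, a_{m−1} ā_{m−1}} in Λ̃, and there is a K-algebra isomorphism Λ̃/soc(Λ̃) ≅ Λ/soc(Λ); that is, Λ̃ is a socle deformation of Λ. -/
/-!
With `b₂ = 0` the algebra `Λ̃` is the algebra `Λ_q` with relations `a_i a_{i+1} = 0`,
`ā_{i-1} ā_{i-2} = 0`, `q_i a_i ā_i = ā_{i-1} a_{i-1}`, for the weights `q_0 = 1 - t b₁` and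
`q_i = 1` otherwise, while `Λ = Λ_1`. The relations show that `e_i, a_i, ā_i, z_i = a_i ā_i`
span `Λ_q`, and they map onto a basis of an explicit model algebra, so `Λ_q` is that model.
When every `q_i` is nonzero, left multiplication by a suitable `z_k`, `ā_k` or `a_k` sends any
element outside the span of the `z_i` to a nonzero multiple of some `z_j`; so every simple left
ideal lies in that span, and each `z_i` spans a simple left ideal. Hence the socle is the span of
the `z_i`, and the quotient by it is the algebra on `e_i, a_i, ā_i` in which all products of two
arrows vanish, whatever `q` is.
-/

open scoped BigOperators

noncomputable section

/-- The relations defining `Λ_q`: `a_i a_{i+1} = 0`, `ā_{i-1} ā_{i-2} = 0` and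
`q_i a_i ā_i - ā_{i-1} a_{i-1} = 0`. -/
inductive LamRel (K : Type) [Field K] (m : ℕ) [NeZero m] (q : ZMod m → K) :
    PathAlg K m → PathAlg K m → Prop
  | row : ∀ i : ZMod m, LamRel K m q (pa K m i * pa K m (i + 1)) 0
  | col : ∀ i : ZMod m, LamRel K m q (pb K m (i - 1) * pb K m (i - 2)) 0
  | comm : ∀ i : ZMod m,
      LamRel K m q (q i • (pa K m i * pb K m i) - pb K m (i - 1) * pa K m (i - 1)) 0

/-- The algebra `Λ_q`. -/
abbrev Lam (K : Type) [Field K] (m : ℕ) [NeZero m] (q : ZMod m → K) : Type :=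
  RingQuot (LamRel K m q)

def lamE (K : Type) [Field K] (m : ℕ) [NeZero m] (q : ZMod m → K) (i : ZMod m) :
    Lam K m q := RingQuot.mkAlgHom K (LamRel K m q) (pe K m i)
def lamA (K : Type) [Field K] (m : ℕ) [NeZero m] (q : ZMod m → K) (i : ZMod m) :
    Lam K m q := RingQuot.mkAlgHom K (LamRel K m q) (pa K m i)
def lamB (K : Type) [Field K] (m : ℕ) [NeZero m] (q : ZMod m → K) (i : ZMod m) :
    Lam K m q := RingQuot.mkAlgHom K (LamRel K m q) (pb K m i)

/-- The socle of a ring `R` as a left module over itself: the sum of all its simple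
(= atomic) left submodules. -/
def socAlg (R : Type) [Ring R] : Submodule R R := sSup {S : Submodule R R | IsAtom S}

/-- The quotient of a `K`-algebra `R` by (the two-sided ideal generated by) its left socle. -/
abbrev socQuot (K : Type) [Field K] (R : Type) [Ring R] [Algebra K R] : Type :=
  RingQuot (fun x y : R => x - y ∈ socAlg R)

/-- The relations defining the deformed algebra `Λ̃` associated with scalars `b₁, b₂, t`. -/
inductive TildeRel (K : Type) [Field K] (m : ℕ) [NeZero m] (b1 b2 t : K) :
    PathAlg K m → PathAlg K m → Prop
  | row : ∀ i : ZMod m, TildeRel K m b1 b2 t (pa K m i * pa K m (i + 1)) 0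
  | col : ∀ i : ZMod m, TildeRel K m b1 b2 t (pb K m (i - 1) * pb K m (i - 2)) 0
  | comm : ∀ j : ZMod m, j ≠ 0 →
      TildeRel K m b1 b2 t
        (pa K m j * pb K m j - pb K m (j - 1) * pa K m (j - 1)
          - (t * (-1 : K) ^ (j.val) * b2) • pe K m j) 0
  | comm0 : TildeRel K m b1 b2 t
        ((1 - t * b1) • (pa K m 0 * pb K m 0) - pb K m (-1) * pa K m (-1)
          - (t * b2) • pe K m 0) 0

/-- The deformed algebra `Λ̃`. -/
abbrev Tilde (K : Type) [Field K] (m : ℕ) [NeZero m] (b1 b2 t : K) : Type :=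
  RingQuot (TildeRel K m b1 b2 t)

def tE (K : Type) [Field K] (m : ℕ) [NeZero m] (b1 b2 t : K) (i : ZMod m) :
    Tilde K m b1 b2 t := RingQuot.mkAlgHom K (TildeRel K m b1 b2 t) (pe K m i)
def tA (K : Type) [Field K] (m : ℕ) [NeZero m] (b1 b2 t : K) (i : ZMod m) :
    Tilde K m b1 b2 t := RingQuot.mkAlgHom K (TildeRel K m b1 b2 t) (pa K m i)
def tB (K : Type) [Field K] (m : ℕ) [NeZero m] (b1 b2 t : K) (i : ZMod m) :
    Tilde K m b1 b2 t := RingQuot.mkAlgHom K (TildeRel K m b1 b2 t) (pb K m i)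

theorem OrderIso.map_sSup_setOf_isAtom {α β : Type*} [CompleteLattice α] [CompleteLattice β]
    (e : α ≃o β) : e (sSup {a | IsAtom a}) = sSup {b | IsAtom b} := by
  rw [e.map_sSup, ← sSup_image]
  congr 1
  ext b
  exact ⟨by rintro ⟨a, ha, rfl⟩; exact (e.isAtom_iff a).2 ha,
    fun hb => ⟨e.symm b, (e.symm.isAtom_iff b).2 hb, e.apply_symm_apply b⟩⟩

theorem RingEquiv.apply_mem_socAlg_iff {R S : Type} [Ring R] [Ring S] (f : R ≃+* S) {x : R} :
    f x ∈ socAlg S ↔ x ∈ socAlg R := by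
  let _ := RingHomInvPair.of_ringEquiv f
  let _ := RingHomInvPair.symm (f : R →+* S) (f.symm : S →+* R)
  have h := (Submodule.orderIsoMapComap f.toSemilinearEquiv).map_sSup_setOf_isAtom
  rw [← socAlg, ← socAlg, Submodule.orderIsoMapComap_apply] at h
  rw [← h, Submodule.mem_map_equiv]
  simp

def RingQuot.algEquivOfSurjective {K R T : Type} [CommSemiring K] [Ring R] [Algebra K R]
    [Ring T] [Algebra K T] (p : Submodule R R) (f : R →ₐ[K] T)
    (hf : Function.Surjective f) (hker : ∀ x, f x = 0 ↔ x ∈ p) :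
    RingQuot (fun x y : R => x - y ∈ p) ≃ₐ[K] T :=
  have hrel : ∀ {x y}, f x = f y ↔ x - y ∈ p := fun {x y} => by
    rw [← hker, map_sub, sub_eq_zero]
  AlgEquiv.ofBijective (liftAlgHom K ⟨f, fun _ _ => hrel.2⟩) <| by
    refine ⟨fun u v huv => ?_, fun y => ?_⟩
    · obtain ⟨x, rfl⟩ := mkAlgHom_surjective K _ u
      obtain ⟨y, rfl⟩ := mkAlgHom_surjective K _ v
      simp only [liftAlgHom_mkAlgHom_apply] at huv
      exact mkAlgHom_rel K (hrel.1 huv)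
    · obtain ⟨x, rfl⟩ := hf y
      exact ⟨mkAlgHom K _ x, liftAlgHom_mkAlgHom_apply ..⟩

section Families

variable {K : Type} [Field K] {m : ℕ} [NeZero m] {R : Type} [Semiring R] [Algebra K R]

structure IsPathFamily (E A B : ZMod m → R) : Prop where
  idempotents : CompleteOrthogonalIdempotents E
  src_a : ∀ i, E i * A i = A i
  tgt_a : ∀ i, A i * E (i + 1) = A i
  src_b : ∀ i, E (i + 1) * B i = B i
  tgt_b : ∀ i, B i * E i = B i

structure IsLamFamily (q : ZMod m → K) (E A B : ZMod m → R) : Prop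
    extends IsPathFamily E A B where
  row : ∀ i, A i * A (i + 1) = 0
  col : ∀ i, B (i - 1) * B (i - 2) = 0
  comm : ∀ i, q i • (A i * B i) = B (i - 1) * A (i - 1)

def genMap (E A B : ZMod m → R) : Gen m → R
  | .e i => E i
  | .a i => A i
  | .abar i => B i

variable {E A B : ZMod m → R}

namespace IsPathFamily

variable (h : IsPathFamily E A B)
include h

lemma mul_eq_zero_of_ne {x y : R} {i j : ZMod m} (hx : x * E i = x) (hy : E j * y = y)
    (hij : i ≠ j) : x * y = 0 := by
  rw [← hx, ← hy, mul_assoc, ← mul_assoc (E i), h.idempotents.ortho hij, zero_mul, mul_zero]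

lemma e_mul_a (j i : ZMod m) : E j * A i = if j = i then A i else 0 := by
  split_ifs with hji
  · rw [hji, h.src_a]
  · exact h.mul_eq_zero_of_ne (h.idempotents.idem j).eq (h.src_a i) hji

lemma e_mul_b (j i : ZMod m) : E j * B i = if j = i + 1 then B i else 0 := by
  split_ifs with hji
  · rw [hji, h.src_b]
  · exact h.mul_eq_zero_of_ne (h.idempotents.idem j).eq (h.src_b i) hji

lemma a_mul_e (j i : ZMod m) : A j * E i = if i = j + 1 then A j else 0 := by
  split_ifs with hij
  · rw [hij, h.tgt_a]
  · exact h.mul_eq_zero_of_ne (h.tgt_a j) (h.idempotents.idem i).eq (Ne.symm hij)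

lemma b_mul_e (j i : ZMod m) : B j * E i = if i = j then B j else 0 := by
  split_ifs with hij
  · rw [hij, h.tgt_b]
  · exact h.mul_eq_zero_of_ne (h.tgt_b j) (h.idempotents.idem i).eq (Ne.symm hij)

lemma a_mul_b (j i : ZMod m) : A j * B i = if j = i then A j * B j else 0 := by
  split_ifs with hji
  · rw [hji]
  · exact h.mul_eq_zero_of_ne (h.tgt_a j) (h.src_b i) (by simpa using hji)

lemma map {S : Type} [Semiring S] [Algebra K S] (f : R →ₐ[K] S) :
    IsPathFamily (f ∘ E) (f ∘ A) (f ∘ B) where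
  idempotents := h.idempotents.map f.toRingHom
  src_a i := by simp [← map_mul, h.src_a]
  tgt_a i := by simp [← map_mul, h.tgt_a]
  src_b i := by simp [← map_mul, h.src_b]
  tgt_b i := by simp [← map_mul, h.tgt_b]

end IsPathFamily

namespace IsLamFamily

variable {q : ZMod m → K} (h : IsLamFamily q E A B)
include h

lemma a_mul_a (i j : ZMod m) : A i * A j = 0 := by
  by_cases hj : j = i + 1
  · exact hj ▸ h.row i
  · exact h.mul_eq_zero_of_ne (h.tgt_a i) (h.src_a j) (Ne.symm hj)

lemma b_mul_b (i j : ZMod m) : B i * B j = 0 := by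
  by_cases hi : i = j + 1
  · have := h.col (j + 2)
    rwa [add_sub_cancel_right, show j + 2 - 1 = j + 1 by ring, ← hi] at this
  · exact h.mul_eq_zero_of_ne (h.tgt_b i) (h.src_b j) hi

lemma b_mul_a (j i : ZMod m) :
    B j * A i = if j = i then q (j + 1) • (A (j + 1) * B (j + 1)) else 0 := by
  split_ifs with hji
  · rw [hji]; simpa using (h.comm (i + 1)).symm
  · exact h.mul_eq_zero_of_ne (h.tgt_b j) (h.src_a i) hji

end IsLamFamily

end Families

section Presentations

variable {K : Type} [Field K] {m : ℕ} [NeZero m] {R : Type} [Ring R] [Algebra K R]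
  {E A B : ZMod m → R}

def PathAlg.lift (h : IsPathFamily E A B) : PathAlg K m →ₐ[K] R :=
  RingQuot.liftAlgHom K ⟨FreeAlgebra.lift K (genMap E A B), fun x y hxy => by
    cases hxy with
    | orth i j hij => simpa [Ee, genMap] using h.idempotents.ortho hij
    | idem i => simpa [Ee, genMap] using (h.idempotents.idem i).eq
    | total => simpa [Ee, genMap] using h.idempotents.complete
    | asrc i => simpa [Ee, Aa, genMap] using h.src_a i
    | atgt i => simpa [Ee, Aa, genMap] using h.tgt_a i
    | bsrc i => simpa [Ee, Bb, genMap] using h.src_b i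
    | btgt i => simpa [Ee, Bb, genMap] using h.tgt_b i⟩

@[simp] lemma PathAlg.lift_pe (h : IsPathFamily E A B) (i : ZMod m) :
    PathAlg.lift h (pe K m i) = E i := by
  simp [PathAlg.lift, pe, Ee, genMap]
@[simp] lemma PathAlg.lift_pa (h : IsPathFamily E A B) (i : ZMod m) :
    PathAlg.lift h (pa K m i) = A i := by
  simp [PathAlg.lift, pa, Aa, genMap]
@[simp] lemma PathAlg.lift_pb (h : IsPathFamily E A B) (i : ZMod m) :
    PathAlg.lift h (pb K m i) = B i := by
  simp [PathAlg.lift, pb, Bb, genMap]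

def Lam.lift {q : ZMod m → K} (h : IsLamFamily q E A B) : Lam K m q →ₐ[K] R :=
  RingQuot.liftAlgHom K ⟨PathAlg.lift h.toIsPathFamily, fun x y hxy => by
    cases hxy with
    | row i => simpa using h.row i
    | col i => simpa using h.col i
    | comm i => simpa [sub_eq_zero] using h.comm i⟩

@[simp] lemma Lam.lift_lamE {q : ZMod m → K} (h : IsLamFamily q E A B) (i : ZMod m) :
    Lam.lift h (lamE K m q i) = E i := by
  simp [Lam.lift, lamE]
@[simp] lemma Lam.lift_lamA {q : ZMod m → K} (h : IsLamFamily q E A B) (i : ZMod m) :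
    Lam.lift h (lamA K m q i) = A i := by
  simp [Lam.lift, lamA]
@[simp] lemma Lam.lift_lamB {q : ZMod m → K} (h : IsLamFamily q E A B) (i : ZMod m) :
    Lam.lift h (lamB K m q i) = B i := by
  simp [Lam.lift, lamB]

def tildeWeights (m : ℕ) (b1 t : K) : ZMod m → K := fun i => if i = 0 then 1 - t * b1 else 1

def Tilde.lift {b1 t : K} (h : IsLamFamily (tildeWeights m b1 t) E A B) :
    Tilde K m b1 0 t →ₐ[K] R :=
  RingQuot.liftAlgHom K ⟨PathAlg.lift h.toIsPathFamily, fun x y hxy => by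
    cases hxy with
    | row i => simpa using h.row i
    | col i => simpa using h.col i
    | comm j hj => simpa [sub_eq_zero, tildeWeights, hj] using h.comm j
    | comm0 => simpa [sub_eq_zero, tildeWeights] using h.comm 0⟩

@[simp] lemma Tilde.lift_tE {b1 t : K} (h : IsLamFamily (tildeWeights m b1 t) E A B)
    (i : ZMod m) : Tilde.lift h (tE K m b1 0 t i) = E i := by
  simp [Tilde.lift, tE]
@[simp] lemma Tilde.lift_tA {b1 t : K} (h : IsLamFamily (tildeWeights m b1 t) E A B)
    (i : ZMod m) : Tilde.lift h (tA K m b1 0 t i) = A i := by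
  simp [Tilde.lift, tA]
@[simp] lemma Tilde.lift_tB {b1 t : K} (h : IsLamFamily (tildeWeights m b1 t) E A B)
    (i : ZMod m) : Tilde.lift h (tB K m b1 0 t i) = B i := by
  simp [Tilde.lift, tB]

theorem isPathFamily_pathAlg : IsPathFamily (pe K m) (pa K m) (pb K m) where
  idempotents := by
    refine ⟨⟨fun i => ?_, fun i j hij => ?_⟩, ?_⟩
    · simpa only [IsIdempotentElem, pe, map_mul] using RingQuot.mkAlgHom_rel K (PathRel.idem i)
    · simpa only [pe, map_mul, map_zero] using RingQuot.mkAlgHom_rel K (PathRel.orth i j hij)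
    · simpa only [pe, map_sum, map_one] using
        RingQuot.mkAlgHom_rel K (PathRel.total (K := K) (m := m))
  src_a i := by simpa only [pe, pa, map_mul] using RingQuot.mkAlgHom_rel K (PathRel.asrc i)
  tgt_a i := by simpa only [pe, pa, map_mul] using RingQuot.mkAlgHom_rel K (PathRel.atgt i)
  src_b i := by simpa only [pe, pb, map_mul] using RingQuot.mkAlgHom_rel K (PathRel.bsrc i)
  tgt_b i := by simpa only [pe, pb, map_mul] using RingQuot.mkAlgHom_rel K (PathRel.btgt i)

theorem isLamFamily_lam (q : ZMod m → K) :
    IsLamFamily q (lamE K m q) (lamA K m q) (lamB K m q) where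
  toIsPathFamily := isPathFamily_pathAlg.map (RingQuot.mkAlgHom K (LamRel K m q))
  row i := by
    simpa only [lamA, map_mul, map_zero] using RingQuot.mkAlgHom_rel K (LamRel.row (q := q) i)
  col i := by
    simpa only [lamB, map_mul, map_zero] using RingQuot.mkAlgHom_rel K (LamRel.col (q := q) i)
  comm i := by
    simpa only [lamA, lamB, map_mul, map_smul, map_sub, map_zero, sub_eq_zero] using
      RingQuot.mkAlgHom_rel K (LamRel.comm (q := q) i)

theorem isLamFamily_tilde (b1 t : K) :
    IsLamFamily (tildeWeights m b1 t) (tE K m b1 0 t) (tA K m b1 0 t) (tB K m b1 0 t) where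
  toIsPathFamily := isPathFamily_pathAlg.map (RingQuot.mkAlgHom K (TildeRel K m b1 0 t))
  row i := by
    simpa only [tA, map_mul, map_zero] using
      RingQuot.mkAlgHom_rel K (TildeRel.row (b1 := b1) (b2 := 0) (t := t) i)
  col i := by
    simpa only [tB, map_mul, map_zero] using
      RingQuot.mkAlgHom_rel K (TildeRel.col (b1 := b1) (b2 := 0) (t := t) i)
  comm i := by
    by_cases hi : i = 0
    · subst hi
      simpa [tA, tB, tildeWeights, sub_eq_zero] using
        RingQuot.mkAlgHom_rel K (TildeRel.comm0 (m := m) (b1 := b1) (b2 := 0) (t := t))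
    · simpa [tA, tB, tildeWeights, hi, sub_eq_zero] using
        RingQuot.mkAlgHom_rel K (TildeRel.comm (b1 := b1) (b2 := 0) (t := t) i hi)

end Presentations

@[ext]
structure RadSqZeroModel (K : Type) [Field K] (m : ℕ) where
  e : ZMod m → K
  a : ZMod m → K
  b : ZMod m → K

namespace RadSqZeroModel

variable {K : Type} [Field K] {m : ℕ}

def equivProd : RadSqZeroModel K m ≃ (ZMod m → K) × (ZMod m → K) × (ZMod m → K) where
  toFun x := (x.e, x.a, x.b)
  invFun y := ⟨y.1, y.2.1, y.2.2⟩

instance : AddCommGroup (RadSqZeroModel K m) := equivProd.addCommGroup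
instance : Module K (RadSqZeroModel K m) := equivProd.module K

@[simp] lemma zero_e : (0 : RadSqZeroModel K m).e = 0 := rfl
@[simp] lemma zero_a : (0 : RadSqZeroModel K m).a = 0 := rfl
@[simp] lemma zero_b : (0 : RadSqZeroModel K m).b = 0 := rfl
@[simp] lemma add_e (x y : RadSqZeroModel K m) : (x + y).e = x.e + y.e := rfl
@[simp] lemma add_a (x y : RadSqZeroModel K m) : (x + y).a = x.a + y.a := rfl
@[simp] lemma add_b (x y : RadSqZeroModel K m) : (x + y).b = x.b + y.b := rfl
@[simp] lemma smul_e (c : K) (x : RadSqZeroModel K m) : (c • x).e = c • x.e := rfl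
@[simp] lemma smul_a (c : K) (x : RadSqZeroModel K m) : (c • x).a = c • x.a := rfl
@[simp] lemma smul_b (c : K) (x : RadSqZeroModel K m) : (c • x).b = c • x.b := rfl

instance : One (RadSqZeroModel K m) := ⟨⟨1, 0, 0⟩⟩

instance : Mul (RadSqZeroModel K m) where
  mul x y :=
    ⟨fun i => x.e i * y.e i,
     fun i => x.e i * y.a i + x.a i * y.e (i + 1),
     fun i => x.e (i + 1) * y.b i + x.b i * y.e i⟩

@[simp] lemma one_e : (1 : RadSqZeroModel K m).e = 1 := rfl
@[simp] lemma one_a : (1 : RadSqZeroModel K m).a = 0 := rfl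
@[simp] lemma one_b : (1 : RadSqZeroModel K m).b = 0 := rfl
@[simp] lemma mul_e (x y : RadSqZeroModel K m) (i : ZMod m) : (x * y).e i = x.e i * y.e i := rfl
@[simp] lemma mul_a (x y : RadSqZeroModel K m) (i : ZMod m) :
    (x * y).a i = x.e i * y.a i + x.a i * y.e (i + 1) := rfl
@[simp] lemma mul_b (x y : RadSqZeroModel K m) (i : ZMod m) :
    (x * y).b i = x.e (i + 1) * y.b i + x.b i * y.e i := rfl

instance : Ring (RadSqZeroModel K m) where
  left_distrib x y z := by ext i <;> simp <;> ring
  right_distrib x y z := by ext i <;> simp <;> ring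
  zero_mul x := by ext i <;> simp
  mul_zero x := by ext i <;> simp
  mul_assoc x y z := by ext i <;> simp <;> ring
  one_mul x := by ext i <;> simp
  mul_one x := by ext i <;> simp

instance : Algebra K (RadSqZeroModel K m) := Algebra.ofModule
  (fun c x y => by ext i <;> simp <;> ring) (fun c x y => by ext i <;> simp <;> ring)

end RadSqZeroModel

-- An element of `Λ_q` by its coordinates in the basis `e_i, a_i, ā_i, z_i = a_i ā_i`; the
-- multiplication below encodes `ā_{i-1} a_{i-1} = q_i z_i`.
@[ext]
structure LamModel (K : Type) [Field K] (m : ℕ) (q : ZMod m → K) where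
  e : ZMod m → K
  a : ZMod m → K
  b : ZMod m → K
  z : ZMod m → K

namespace LamModel

variable {K : Type} [Field K] {m : ℕ} {q : ZMod m → K}

def equivProd :
    LamModel K m q ≃ (ZMod m → K) × (ZMod m → K) × (ZMod m → K) × (ZMod m → K) where
  toFun x := (x.e, x.a, x.b, x.z)
  invFun y := ⟨y.1, y.2.1, y.2.2.1, y.2.2.2⟩

instance : AddCommGroup (LamModel K m q) := equivProd.addCommGroup
instance : Module K (LamModel K m q) := equivProd.module K

@[simp] lemma zero_e : (0 : LamModel K m q).e = 0 := rfl
@[simp] lemma zero_a : (0 : LamModel K m q).a = 0 := rfl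
@[simp] lemma zero_b : (0 : LamModel K m q).b = 0 := rfl
@[simp] lemma zero_z : (0 : LamModel K m q).z = 0 := rfl
@[simp] lemma add_e (x y : LamModel K m q) : (x + y).e = x.e + y.e := rfl
@[simp] lemma add_a (x y : LamModel K m q) : (x + y).a = x.a + y.a := rfl
@[simp] lemma add_b (x y : LamModel K m q) : (x + y).b = x.b + y.b := rfl
@[simp] lemma add_z (x y : LamModel K m q) : (x + y).z = x.z + y.z := rfl
@[simp] lemma smul_e (c : K) (x : LamModel K m q) : (c • x).e = c • x.e := rfl
@[simp] lemma smul_a (c : K) (x : LamModel K m q) : (c • x).a = c • x.a := rfl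
@[simp] lemma smul_b (c : K) (x : LamModel K m q) : (c • x).b = c • x.b := rfl
@[simp] lemma smul_z (c : K) (x : LamModel K m q) : (c • x).z = c • x.z := rfl

@[simp] lemma sum_e {ι : Type} (s : Finset ι) (f : ι → LamModel K m q) :
    (∑ i ∈ s, f i).e = ∑ i ∈ s, (f i).e :=
  map_sum (⟨⟨e, rfl⟩, fun _ _ => rfl⟩ : LamModel K m q →+ _) f s
@[simp] lemma sum_a {ι : Type} (s : Finset ι) (f : ι → LamModel K m q) :
    (∑ i ∈ s, f i).a = ∑ i ∈ s, (f i).a :=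
  map_sum (⟨⟨a, rfl⟩, fun _ _ => rfl⟩ : LamModel K m q →+ _) f s
@[simp] lemma sum_b {ι : Type} (s : Finset ι) (f : ι → LamModel K m q) :
    (∑ i ∈ s, f i).b = ∑ i ∈ s, (f i).b :=
  map_sum (⟨⟨b, rfl⟩, fun _ _ => rfl⟩ : LamModel K m q →+ _) f s
@[simp] lemma sum_z {ι : Type} (s : Finset ι) (f : ι → LamModel K m q) :
    (∑ i ∈ s, f i).z = ∑ i ∈ s, (f i).z :=
  map_sum (⟨⟨z, rfl⟩, fun _ _ => rfl⟩ : LamModel K m q →+ _) f s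

instance : One (LamModel K m q) := ⟨⟨1, 0, 0, 0⟩⟩

instance : Mul (LamModel K m q) where
  mul x y :=
    ⟨fun i => x.e i * y.e i,
     fun i => x.e i * y.a i + x.a i * y.e (i + 1),
     fun i => x.e (i + 1) * y.b i + x.b i * y.e i,
     fun i => x.e i * y.z i + x.z i * y.e i + x.a i * y.b i +
       q i * (x.b (i - 1) * y.a (i - 1))⟩

@[simp] lemma one_e : (1 : LamModel K m q).e = 1 := rfl
@[simp] lemma one_a : (1 : LamModel K m q).a = 0 := rfl
@[simp] lemma one_b : (1 : LamModel K m q).b = 0 := rfl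
@[simp] lemma one_z : (1 : LamModel K m q).z = 0 := rfl
@[simp] lemma mul_e (x y : LamModel K m q) (i : ZMod m) : (x * y).e i = x.e i * y.e i := rfl
@[simp] lemma mul_a (x y : LamModel K m q) (i : ZMod m) :
    (x * y).a i = x.e i * y.a i + x.a i * y.e (i + 1) := rfl
@[simp] lemma mul_b (x y : LamModel K m q) (i : ZMod m) :
    (x * y).b i = x.e (i + 1) * y.b i + x.b i * y.e i := rfl
@[simp] lemma mul_z (x y : LamModel K m q) (i : ZMod m) :
    (x * y).z i = x.e i * y.z i + x.z i * y.e i + x.a i * y.b i +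
      q i * (x.b (i - 1) * y.a (i - 1)) := rfl

instance : Ring (LamModel K m q) where
  left_distrib x y z := by ext i <;> simp <;> ring
  right_distrib x y z := by ext i <;> simp <;> ring
  zero_mul x := by ext i <;> simp
  mul_zero x := by ext i <;> simp
  mul_assoc x y z := by ext i <;> simp <;> ring
  one_mul x := by ext i <;> simp
  mul_one x := by ext i <;> simp

instance : Algebra K (LamModel K m q) := Algebra.ofModule
  (fun c x y => by ext i <;> simp <;> ring) (fun c x y => by ext i <;> simp <;> ring)

def toRadSqZero : LamModel K m q →ₐ[K] RadSqZeroModel K m where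
  toFun x := ⟨x.e, x.a, x.b⟩
  map_one' := rfl
  map_mul' _ _ := rfl
  map_zero' := rfl
  map_add' _ _ := rfl
  commutes' c := by
    simp only [Algebra.algebraMap_eq_smul_one]
    rfl

lemma toRadSqZero_surjective : Function.Surjective (toRadSqZero (K := K) (m := m) (q := q)) :=
  fun y => ⟨⟨y.e, y.a, y.b, 0⟩, rfl⟩

lemma toRadSqZero_eq_zero_iff {x : LamModel K m q} :
    toRadSqZero x = 0 ↔ x.e = 0 ∧ x.a = 0 ∧ x.b = 0 :=
  RadSqZeroModel.ext_iff

variable (K q) in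
def basisE (i : ZMod m) : LamModel K m q := ⟨Pi.single i 1, 0, 0, 0⟩
variable (K q) in
def basisA (i : ZMod m) : LamModel K m q := ⟨0, Pi.single i 1, 0, 0⟩
variable (K q) in
def basisB (i : ZMod m) : LamModel K m q := ⟨0, 0, Pi.single i 1, 0⟩
variable (K q) in
def basisZ (i : ZMod m) : LamModel K m q := ⟨0, 0, 0, Pi.single i 1⟩

lemma eq_sum_basis [NeZero m] (x : LamModel K m q) :
    x = ∑ i, x.e i • basisE K q i + ∑ i, x.a i • basisA K q i +
      ∑ i, x.b i • basisB K q i + ∑ i, x.z i • basisZ K q i := by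
  ext k <;> simp [basisE, basisA, basisB, basisZ, Finset.sum_apply, Pi.single_apply]

lemma basisA_mul_basisB (i : ZMod m) : basisA K q i * basisB K q i = basisZ K q i := by
  ext k <;> simp [basisA, basisB, basisZ, Pi.single_apply]

theorem isLamFamily_basis [NeZero m] (q : ZMod m → K) :
    IsLamFamily q (basisE K q) (basisA K q) (basisB K q) where
  idempotents := by
    refine ⟨⟨fun i => ?_, fun i j hij => ?_⟩, ?_⟩
    · ext k <;> simp [basisE, Pi.single_apply]
    · ext k <;> simp [basisE, Pi.single_apply]; grind
    · ext k <;> simp [basisE, Finset.sum_apply, Pi.single_apply]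
  src_a i := by ext k <;> simp [basisE, basisA, Pi.single_apply]
  tgt_a i := by ext k <;> simp [basisE, basisA, Pi.single_apply]
  src_b i := by ext k <;> simp [basisE, basisB, Pi.single_apply]
  tgt_b i := by ext k <;> simp [basisE, basisB, Pi.single_apply]
  row i := by ext k <;> simp [basisA, Pi.single_apply]
  col i := by ext k <;> simp [basisB, Pi.single_apply]
  comm i := by ext k <;> simp [basisA, basisB, Pi.single_apply]; grind

lemma basisZ_ne_zero (i : ZMod m) : basisZ K q i ≠ 0 := fun h => by
  simpa [basisZ] using congr_fun (congrArg z h) i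

lemma mul_basisZ (y : LamModel K m q) (i : ZMod m) :
    y * basisZ K q i = y.e i • basisZ K q i := by
  ext k <;> simp [basisZ, Pi.single_apply]; split_ifs <;> simp_all

lemma basisZ_mul (x : LamModel K m q) (i : ZMod m) :
    basisZ K q i * x = x.e i • basisZ K q i := by
  ext k <;> simp [basisZ, Pi.single_apply]; split_ifs <;> simp_all

lemma basisA_mul (x : LamModel K m q) (hx : x.e = 0) (i : ZMod m) :
    basisA K q i * x = x.b i • basisZ K q i := by
  ext k <;> simp [basisA, basisZ, Pi.single_apply, hx]; split_ifs <;> simp_all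

lemma basisB_mul (x : LamModel K m q) (hx : x.e = 0) (i : ZMod m) :
    basisB K q i * x = (q (i + 1) * x.a i) • basisZ K q (i + 1) := by
  ext k <;> simp [basisB, basisZ, Pi.single_apply, hx, sub_eq_iff_eq_add]; split_ifs <;> simp_all

lemma exists_mul_eq_smul_basisZ (hq : ∀ i, q i ≠ 0) {x : LamModel K m q}
    (hx : toRadSqZero x ≠ 0) :
    ∃ y, ∃ c : K, ∃ k, c ≠ 0 ∧ y * x = c • basisZ K q k := by
  by_cases he : x.e = 0
  · by_cases ha : x.a = 0
    · obtain ⟨k, hk⟩ :=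
        Function.ne_iff.1 fun hb => hx (toRadSqZero_eq_zero_iff.2 ⟨he, ha, hb⟩)
      exact ⟨basisA K q k, _, k, hk, basisA_mul x he k⟩
    · obtain ⟨k, hk⟩ := Function.ne_iff.1 ha
      exact ⟨basisB K q k, _, k + 1, mul_ne_zero (hq _) hk, basisB_mul x he k⟩
  · obtain ⟨k, hk⟩ := Function.ne_iff.1 he
    exact ⟨basisZ K q k, _, k, hk, basisZ_mul x k⟩

lemma exists_mul_ne_zero_of_ne_zero (hq : ∀ i, q i ≠ 0) {x : LamModel K m q} (hx : x ≠ 0) :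
    ∃ y, y * x ≠ 0 ∧ toRadSqZero (y * x) = 0 := by
  by_cases hx' : toRadSqZero x = 0
  · exact ⟨1, by rwa [one_mul], by rwa [one_mul]⟩
  · obtain ⟨y, c, k, hc, hyx⟩ := exists_mul_eq_smul_basisZ hq hx'
    refine ⟨y, hyx ▸ smul_ne_zero hc (basisZ_ne_zero k), ?_⟩
    simp [hyx, toRadSqZero_eq_zero_iff, basisZ]

lemma isAtom_span_basisZ (i : ZMod m) :
    IsAtom (Submodule.span (LamModel K m q) {basisZ K q i}) := by
  refine ⟨by simpa using basisZ_ne_zero i, fun S hS => ?_⟩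
  by_contra hS0
  obtain ⟨v, hvS, hv0⟩ := Submodule.exists_mem_ne_zero_of_ne_bot hS0
  obtain ⟨d, rfl⟩ := Submodule.mem_span_singleton.1 (hS.le hvS)
  rw [smul_eq_mul, mul_basisZ] at hvS hv0
  have hz : basisZ K q i ∈ S := by
    simpa [smul_smul, inv_mul_cancel₀ (left_ne_zero_of_smul hv0)] using
      S.smul_of_tower_mem (d.e i)⁻¹ hvS
  exact hS.not_ge (Submodule.span_le.2 (Set.singleton_subset_iff.2 hz))

variable [NeZero m]

lemma eq_sum_basisZ {x : LamModel K m q} (hx : toRadSqZero x = 0) :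
    x = ∑ i, x.z i • basisZ K q i := by
  obtain ⟨he, ha, hb⟩ := toRadSqZero_eq_zero_iff.1 hx
  conv_lhs => rw [eq_sum_basis x]
  simp [he, ha, hb]

theorem socAlg_eq_ker (hq : ∀ i, q i ≠ 0) :
    socAlg (LamModel K m q) = RingHom.ker (toRadSqZero (K := K) (m := m) (q := q)) := by
  refine le_antisymm (sSup_le fun S hS => ?_) fun x hx => ?_
  · obtain ⟨x, hxS, hx0⟩ := Submodule.exists_mem_ne_zero_of_ne_bot hS.1
    obtain ⟨y, hyx, hyx_ker⟩ := exists_mul_ne_zero_of_ne_zero hq hx0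
    have hmeet : S ⊓ RingHom.ker toRadSqZero ≠ ⊥ := fun h => hyx <|
      (Submodule.eq_bot_iff _).1 h _ ⟨S.smul_mem y hxS, hyx_ker⟩
    exact inf_eq_left.1 ((hS.le_iff.1 inf_le_left).resolve_left hmeet)
  · rw [eq_sum_basisZ hx]
    exact sum_mem fun i _ => Submodule.smul_of_tower_mem _ _ <|
      le_sSup (α := Submodule _ _) (isAtom_span_basisZ i) (Submodule.mem_span_singleton_self _)

theorem mem_socAlg_iff (hq : ∀ i, q i ≠ 0) {x : LamModel K m q} :
    x ∈ socAlg (LamModel K m q) ↔ toRadSqZero x = 0 := by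
  rw [socAlg_eq_ker hq, RingHom.mem_ker]

theorem restrictScalars_socAlg_eq_span (hq : ∀ i, q i ≠ 0) :
    (socAlg (LamModel K m q)).restrictScalars K = Submodule.span K (Set.range (basisZ K q)) := by
  refine le_antisymm (fun x hx => ?_) (Submodule.span_le.2 ?_)
  · rw [eq_sum_basisZ ((mem_socAlg_iff hq).1 hx)]
    exact sum_mem fun i _ => Submodule.smul_mem _ _ (Submodule.subset_span ⟨i, rfl⟩)
  · rintro _ ⟨i, rfl⟩
    exact (mem_socAlg_iff hq).2 (toRadSqZero_eq_zero_iff.2 (by simp [basisZ]))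

end LamModel

section Spanning

variable {K : Type} [Field K] {m : ℕ} [NeZero m] {R : Type} [Semiring R] [Algebra K R]
  {q : ZMod m → K}

def LamModel.eval (E A B : ZMod m → R) : LamModel K m q →ₗ[K] R where
  toFun y :=
    ∑ i, y.e i • E i + ∑ i, y.a i • A i + ∑ i, y.b i • B i + ∑ i, y.z i • (A i * B i)
  map_add' x y := by
    simp only [LamModel.add_e, LamModel.add_a, LamModel.add_b, LamModel.add_z, Pi.add_apply,
      add_smul, Finset.sum_add_distrib]
    abel
  map_smul' c x := by
    simp only [LamModel.smul_e, LamModel.smul_a, LamModel.smul_b, LamModel.smul_z,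
      Pi.smul_apply, smul_eq_mul, mul_smul, RingHom.id_apply, Finset.smul_sum, smul_add]

variable {E A B : ZMod m → R}

namespace LamModel

@[simp] lemma eval_basisE (i : ZMod m) : eval E A B (basisE K q i) = E i := by
  simp [eval, basisE, Pi.single_apply]
@[simp] lemma eval_basisA (i : ZMod m) : eval E A B (basisA K q i) = A i := by
  simp [eval, basisA, Pi.single_apply]
@[simp] lemma eval_basisB (i : ZMod m) : eval E A B (basisB K q i) = B i := by
  simp [eval, basisB, Pi.single_apply]
@[simp] lemma eval_basisZ (i : ZMod m) : eval E A B (basisZ K q i) = A i * B i := by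
  simp [eval, basisZ, Pi.single_apply]

end LamModel

namespace IsLamFamily

variable (h : IsLamFamily q E A B)
include h

lemma genMap_mul_basis_mem_range_eval (g : Gen m) (i : ZMod m) :
    ∀ t ∈ ({E i, A i, B i, A i * B i} : Set R),
      genMap E A B g * t ∈ LinearMap.range (LamModel.eval (q := q) E A B) := by
  set V := LinearMap.range (LamModel.eval (q := q) E A B)
  have memE (k) : E k ∈ V := ⟨_, LamModel.eval_basisE k⟩
  have memA (k) : A k ∈ V := ⟨_, LamModel.eval_basisA k⟩
  have memB (k) : B k ∈ V := ⟨_, LamModel.eval_basisB k⟩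
  have memZ (k) : A k * B k ∈ V := ⟨_, LamModel.eval_basisZ k⟩
  rintro t (rfl | rfl | rfl | rfl) <;> rcases g with j | j | j <;> dsimp only [genMap]
  · rw [h.idempotents.mul_eq]; split_ifs; exacts [memE j, zero_mem V]
  · rw [h.a_mul_e]; split_ifs; exacts [memA j, zero_mem V]
  · rw [h.b_mul_e]; split_ifs; exacts [memB j, zero_mem V]
  · rw [h.e_mul_a]; split_ifs; exacts [memA i, zero_mem V]
  · rw [h.a_mul_a]; exact zero_mem V
  · rw [h.b_mul_a]; split_ifs; exacts [V.smul_mem _ (memZ _), zero_mem V]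
  · rw [h.e_mul_b]; split_ifs; exacts [memB i, zero_mem V]
  · rw [h.a_mul_b]; split_ifs; exacts [memZ j, zero_mem V]
  · rw [h.b_mul_b]; exact zero_mem V
  · rw [← mul_assoc, h.e_mul_a]; split_ifs; exacts [memZ i, by simp]
  · rw [← mul_assoc, h.a_mul_a, zero_mul]; exact zero_mem V
  · rw [← mul_assoc, h.b_mul_a]
    split_ifs
    · rw [smul_mul_assoc, mul_assoc, h.b_mul_b, mul_zero, smul_zero]; exact zero_mem V
    · rw [zero_mul]; exact zero_mem V

lemma genMap_mul_mem_range_eval (g : Gen m) {v : R}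
    (hv : v ∈ LinearMap.range (LamModel.eval (q := q) E A B)) :
    genMap E A B g * v ∈ LinearMap.range (LamModel.eval (q := q) E A B) := by
  obtain ⟨y, rfl⟩ := hv
  have hmem (i) (t) (ht : t ∈ ({E i, A i, B i, A i * B i} : Set R)) (c : K) :=
    Submodule.smul_mem _ c (h.genMap_mul_basis_mem_range_eval g i t ht)
  simp only [LamModel.eval, LinearMap.coe_mk, AddHom.coe_mk, mul_add, Finset.mul_sum,
    mul_smul_comm]
  refine add_mem (add_mem (add_mem ?_ ?_) ?_) ?_ <;>
    exact sum_mem fun i _ => hmem i _ (by simp) _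

theorem eval_surjective (hgen : Algebra.adjoin K (Set.range (genMap E A B)) = ⊤) :
    Function.Surjective (LamModel.eval (q := q) E A B) := by
  set V := LinearMap.range (LamModel.eval (q := q) E A B)
  suffices hmul : ∀ x : R, ∀ v ∈ V, x * v ∈ V by
    have hone : (1 : R) ∈ V :=
      h.idempotents.complete ▸ V.sum_mem fun i _ => ⟨_, LamModel.eval_basisE i⟩
    exact fun x => mul_one x ▸ hmul x 1 hone
  intro x
  have hx : x ∈ Algebra.adjoin K (Set.range (genMap E A B)) := hgen ▸ Algebra.mem_top
  induction hx using Algebra.adjoin_induction with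
  | mem x hx =>
    obtain ⟨g, rfl⟩ := hx
    exact fun v hv => h.genMap_mul_mem_range_eval g hv
  | algebraMap c =>
    exact fun v hv => by simpa [Algebra.algebraMap_eq_smul_one] using V.smul_mem c hv
  | add x y _ _ hx hy => exact fun v hv => by rw [add_mul]; exact V.add_mem (hx v hv) (hy v hv)
  | mul x y _ _ hx hy => exact fun v hv => by rw [mul_assoc]; exact hx _ (hy v hv)

theorem bijective_of_apply_eq_basis (hgen : Algebra.adjoin K (Set.range (genMap E A B)) = ⊤)
    (φ : R →ₐ[K] LamModel K m q) (hE : ∀ i, φ (E i) = LamModel.basisE K q i)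
    (hA : ∀ i, φ (A i) = LamModel.basisA K q i) (hB : ∀ i, φ (B i) = LamModel.basisB K q i) :
    Function.Bijective φ := by
  have hφ : Function.LeftInverse φ (LamModel.eval E A B) := fun y => by
    conv_rhs => rw [LamModel.eq_sum_basis y]
    simp [LamModel.eval, hE, hA, hB, LamModel.basisA_mul_basisB]
  exact ⟨(hφ.rightInverse_of_surjective (h.eval_surjective hgen)).injective, hφ.surjective⟩

end IsLamFamily

theorem adjoin_range_genMap_eq_top (f : PathAlg K m →ₐ[K] R) (hf : Function.Surjective f) :
    Algebra.adjoin K (Set.range (genMap (f ∘ pe K m) (f ∘ pa K m) (f ∘ pb K m))) = ⊤ := by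
  have hgen : genMap (f ∘ pe K m) (f ∘ pa K m) (f ∘ pb K m) =
      f.comp (RingQuot.mkAlgHom K (PathRel K m)) ∘ FreeAlgebra.ι K := by
    funext g; cases g <;> rfl
  rw [hgen, Set.range_comp, ← AlgHom.map_adjoin, FreeAlgebra.adjoin_range_ι, Algebra.map_top,
    AlgHom.range_eq_top]
  exact hf.comp (RingQuot.mkAlgHom_surjective K _)

def lamAlgEquiv (q : ZMod m → K) : Lam K m q ≃ₐ[K] LamModel K m q :=
  AlgEquiv.ofBijective (Lam.lift (LamModel.isLamFamily_basis q)) <|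
    (isLamFamily_lam q).bijective_of_apply_eq_basis
      (adjoin_range_genMap_eq_top _ (RingQuot.mkAlgHom_surjective K _)) _
      (Lam.lift_lamE _) (Lam.lift_lamA _) (Lam.lift_lamB _)

def tildeAlgEquiv (b1 t : K) : Tilde K m b1 0 t ≃ₐ[K] LamModel K m (tildeWeights m b1 t) :=
  AlgEquiv.ofBijective (Tilde.lift (LamModel.isLamFamily_basis _)) <|
    (isLamFamily_tilde b1 t).bijective_of_apply_eq_basis
      (adjoin_range_genMap_eq_top _ (RingQuot.mkAlgHom_surjective K _)) _
      (Tilde.lift_tE _) (Tilde.lift_tA _) (Tilde.lift_tB _)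

end Spanning

section Socle

variable {K : Type} [Field K] {m : ℕ} [NeZero m] {R : Type} [Ring R] [Algebra K R]
  {q : ZMod m → K} (hq : ∀ i, q i ≠ 0) (e : R ≃ₐ[K] LamModel K m q)
include hq

theorem restrictScalars_socAlg_eq_span {Z : ZMod m → R}
    (hZ : ∀ i, e (Z i) = LamModel.basisZ K q i) :
    (socAlg R).restrictScalars K = Submodule.span K (Set.range Z) := by
  have hspan : Submodule.span K (Set.range (LamModel.basisZ K q)) =
      (Submodule.span K (Set.range Z)).map (e.toLinearEquiv : R →ₗ[K] LamModel K m q) := by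
    rw [Submodule.map_span, ← Set.range_comp]
    exact congrArg _ (congrArg Set.range (funext hZ).symm)
  ext x
  rw [Submodule.restrictScalars_mem, ← e.toRingEquiv.apply_mem_socAlg_iff,
    ← Submodule.restrictScalars_mem K, LamModel.restrictScalars_socAlg_eq_span hq, hspan,
    Submodule.mem_map_equiv]
  simp

def socQuotAlgEquivRadSqZero : socQuot K R ≃ₐ[K] RadSqZeroModel K m :=
  RingQuot.algEquivOfSurjective (socAlg R) (LamModel.toRadSqZero.comp e.toAlgHom)
    (LamModel.toRadSqZero_surjective.comp e.surjective) fun x => by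
      rw [← e.toRingEquiv.apply_mem_socAlg_iff, LamModel.mem_socAlg_iff hq]
      rfl

end Socle

theorem tilde_socle_deformation_of_b2_eq_zero_general
    (K : Type) [Field K] (m : ℕ) [NeZero m]
    (b1 t : K) (h : t * b1 ≠ 1) :
    Submodule.restrictScalars K (socAlg (Tilde K m b1 0 t)) =
        Submodule.span K {x : Tilde K m b1 0 t | ∃ i : ZMod m,
          x = tA K m b1 0 t i * tB K m b1 0 t i} ∧
    Nonempty (socQuot K (Tilde K m b1 0 t) ≃ₐ[K] socQuot K (Lam K m (fun _ => 1))) := by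
  have hq : ∀ i, tildeWeights m b1 t i ≠ 0 := fun i => by
    unfold tildeWeights; split_ifs
    exacts [sub_ne_zero.2 h.symm, one_ne_zero]
  have hZ (i : ZMod m) : tildeAlgEquiv b1 t (tA K m b1 0 t i * tB K m b1 0 t i) =
      LamModel.basisZ K _ i := by
    simp [tildeAlgEquiv, LamModel.basisA_mul_basisB]
  refine ⟨?_, ⟨(socQuotAlgEquivRadSqZero hq (tildeAlgEquiv b1 t)).trans
    (socQuotAlgEquivRadSqZero (fun _ => one_ne_zero) (lamAlgEquiv _)).symm⟩⟩
  rw [restrictScalars_socAlg_eq_span hq _ hZ]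
  congr 1
  ext x
  exact exists_congr fun i => eq_comm

/-- for `m ≥ 4`, `b₂ = 0` and `t b₁ ≠ 1`, the socle of `Λ̃` is the `K`-span of
the elements `a_i ā_i`, and `Λ̃/soc(Λ̃) ≅ Λ/soc(Λ)` as `K`-algebras, so `Λ̃` is a socle
deformation of `Λ`. -/
theorem tilde_socle_deformation_of_b2_eq_zero
    (K : Type) [Field K] (m : ℕ) [NeZero m] (hm : 4 ≤ m)
    (b1 t : K) (h : t * b1 ≠ 1) :
    Submodule.restrictScalars K (socAlg (Tilde K m b1 0 t)) =
        Submodule.span K {x : Tilde K m b1 0 t | ∃ i : ZMod m,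
          x = tA K m b1 0 t i * tB K m b1 0 t i} ∧
    Nonempty (socQuot K (Tilde K m b1 0 t) ≃ₐ[K] socQuot K (Lam K m (fun _ => 1))) :=
  tilde_socle_deformation_of_b2_eq_zero_general K m b1 t h
end
end

section
/- The images of the monomials γ_i^s δ_{i+s−t}^t, for 0 ≤ i ≤ m−1 and integers s, t ≥ 0 (subscripts modulo m; the case s = t = 0 gives e_i), form a K-vector space basis of E(Λ_q). In particular, every nonzero product of arrows in E(Λ_q) can be written uniquely as a nonzero scalar times such a monomial. -/
open scoped BigOperators

noncomputable section

namespace ExtBasisAux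

variable (K : Type) [Field K] (m : ℕ) [NeZero m] (q : ZMod m → K)

/-- the product `q k * q (k+1) * ⋯ * q (k+s-1)` with indices in `ZMod m`. -/
def Qb (k : ZMod m) (s : ℕ) : K := ∏ l ∈ Finset.range s, q (k + (l : ZMod m))

@[simp] lemma Qb_zero (k : ZMod m) : Qb K m q k 0 = 1 := rfl

lemma Qb_succ (k : ZMod m) (s : ℕ) :
    Qb K m q k (s + 1) = q k * Qb K m q (k + 1) s := by
  unfold Qb
  rw [Finset.prod_range_succ']
  rw [mul_comm]
  simp only [Nat.cast_zero, add_zero]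
  congr 1
  refine Finset.prod_congr rfl fun l _ => ?_
  congr 1
  push_cast
  ring

lemma prel {x y : FA K m} (h : PathRel K m x y) :
    RingQuot.mkAlgHom K (ExtRel K m q) (RingQuot.mkAlgHom K (PathRel K m) x) =
      RingQuot.mkAlgHom K (ExtRel K m q) (RingQuot.mkAlgHom K (PathRel K m) y) :=
  congrArg _ (RingQuot.mkAlgHom_rel K h)

lemma xe_mul_xe (i j : ZMod m) :
    xe K m q i * xe K m q j = if i = j then xe K m q i else 0 := by
  split_ifs with h
  · subst h
    have := prel K m q (PathRel.idem i)
    simpa [xe, pe, map_mul] using this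
  · have := prel K m q (PathRel.orth i j h)
    simpa [xe, pe, map_mul] using this

lemma one_eq_sum : (1 : ExtAlg K m q) = ∑ i : ZMod m, xe K m q i := by
  have := prel K m q (PathRel.total (K := K) (m := m))
  simp only [map_sum, map_one] at this
  exact this.symm

lemma xe_mul_xa_self (i : ZMod m) : xe K m q i * xa K m q i = xa K m q i := by
  have := prel K m q (PathRel.asrc (K := K) (m := m) i)
  simpa [xe, xa, pe, pa, map_mul] using this

lemma xa_mul_xe_self (i : ZMod m) : xa K m q i * xe K m q (i + 1) = xa K m q i := by
  have := prel K m q (PathRel.atgt (K := K) (m := m) i)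
  simpa [xe, xa, pe, pa, map_mul] using this

lemma xe_mul_xb_self (i : ZMod m) : xe K m q (i + 1) * xb K m q i = xb K m q i := by
  have := prel K m q (PathRel.bsrc (K := K) (m := m) i)
  simpa [xe, xb, pe, pb, map_mul] using this

lemma xb_mul_xe_self (i : ZMod m) : xb K m q i * xe K m q i = xb K m q i := by
  have := prel K m q (PathRel.btgt (K := K) (m := m) i)
  simpa [xe, xb, pe, pb, map_mul] using this

lemma xe_mul_xa (j i : ZMod m) :
    xe K m q j * xa K m q i = if j = i then xa K m q i else 0 := by
  conv_lhs => rw [← xe_mul_xa_self K m q i, ← mul_assoc, xe_mul_xe]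
  split_ifs with h
  · rw [h, xe_mul_xa_self]
  · rw [zero_mul]

lemma xa_mul_xe (i j : ZMod m) :
    xa K m q i * xe K m q j = if i + 1 = j then xa K m q i else 0 := by
  conv_lhs => rw [← xa_mul_xe_self K m q i, mul_assoc, xe_mul_xe]
  split_ifs with h
  · rw [xa_mul_xe_self]
  · rw [mul_zero]

lemma xe_mul_xb (j i : ZMod m) :
    xe K m q j * xb K m q i = if j = i + 1 then xb K m q i else 0 := by
  conv_lhs => rw [← xe_mul_xb_self K m q i, ← mul_assoc, xe_mul_xe]
  split_ifs with h
  · rw [h, xe_mul_xb_self]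
  · rw [zero_mul]

lemma xb_mul_xe (i j : ZMod m) :
    xb K m q i * xe K m q j = if i = j then xb K m q i else 0 := by
  conv_lhs => rw [← xb_mul_xe_self K m q i, mul_assoc, xe_mul_xe]
  split_ifs with h
  · rw [xb_mul_xe_self]
  · rw [mul_zero]

lemma xb_mul_xa (i : ZMod m) :
    xb K m q i * xa K m q i = (-(q (i + 1))⁻¹) • (xa K m q (i + 1) * xb K m q (i + 1)) := by
  have h := RingQuot.mkAlgHom_rel K (ExtRel.rel (K := K) (m := m) (q := q) (i + 1))
  simp only [map_add, map_smul, map_mul, map_zero, add_sub_cancel_right] at h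
  exact (eq_neg_of_add_eq_zero_right h).trans (neg_smul _ _).symm

lemma xe_mul_gam (j i : ZMod m) (s : ℕ) :
    xe K m q j * gam K m q i s = if j = i then gam K m q i s else 0 := by
  cases s with
  | zero =>
    show xe K m q j * xe K m q i = if j = i then xe K m q i else 0
    rw [xe_mul_xe]
    split_ifs with h
    · rw [h]
    · rfl
  | succ n =>
    show xe K m q j * (xa K m q i * gam K m q (i + 1) n)
        = if j = i then gam K m q i (n + 1) else 0
    rw [← mul_assoc, xe_mul_xa]
    split_ifs with h
    · rfl
    · rw [zero_mul]

lemma gam_head (i : ZMod m) (s : ℕ) :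
    xe K m q i * gam K m q i s = gam K m q i s := by
  rw [xe_mul_gam, if_pos rfl]

lemma xa_mul_gam (j i : ZMod m) (s : ℕ) :
    xa K m q j * gam K m q i s = if j + 1 = i then gam K m q j (s + 1) else 0 := by
  conv_lhs => rw [← gam_head K m q i s, ← mul_assoc, xa_mul_xe]
  split_ifs with h
  · subst h
    rfl
  · rw [zero_mul]

lemma xb_mul_gam_ne {j i : ZMod m} (h : j ≠ i) (s : ℕ) :
    xb K m q j * gam K m q i s = 0 := by
  conv_lhs => rw [← gam_head K m q i s, ← mul_assoc, xb_mul_xe, if_neg h]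
  rw [zero_mul]

lemma xb_mul_gam_self (s : ℕ) : ∀ i : ZMod m,
    xb K m q i * gam K m q i s
      = ((-1 : K) ^ s * (Qb K m q (i + 1) s)⁻¹)
          • (gam K m q (i + 1) s * xb K m q (i + (s : ZMod m))) := by
  induction s with
  | zero =>
    intro i
    show xb K m q i * xe K m q i = _
    rw [xb_mul_xe_self]
    have h0 : ((0 : ℕ) : ZMod m) = 0 := Nat.cast_zero
    rw [h0, add_zero]
    show xb K m q i = ((-1 : K) ^ 0 * (Qb K m q (i + 1) 0)⁻¹)
        • (xe K m q (i + 1) * xb K m q i)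
    rw [xe_mul_xb_self]
    simp
  | succ n ih =>
    intro i
    show xb K m q i * (xa K m q i * gam K m q (i + 1) n) = _
    rw [← mul_assoc, xb_mul_xa, smul_mul_assoc, mul_assoc, ih (i + 1),
      mul_smul_comm, smul_smul,
      ← mul_assoc (xa K m q (i + 1)) (gam K m q (i + 1 + 1) n)]
    have hidx : i + 1 + (n : ZMod m) = i + ((n + 1 : ℕ) : ZMod m) := by push_cast; ring
    rw [hidx]
    have hgam : xa K m q (i + 1) * gam K m q (i + 1 + 1) n = gam K m q (i + 1) (n + 1) := rfl
    rw [hgam]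
    congr 1
    rw [Qb_succ, mul_inv, pow_succ]
    ring

lemma xb_mul_del (j : ZMod m) (t : ℕ) :
    xb K m q (j + (t : ZMod m)) * del K m q j t = del K m q j (t + 1) := rfl

/-- The basis monomials. -/
def Bmon : ZMod m × ℕ × ℕ → ExtAlg K m q := fun p =>
  gam K m q p.1 p.2.1 * del K m q (p.1 + (p.2.1 : ZMod m) - (p.2.2 : ZMod m)) p.2.2

lemma Bmon_e (i : ZMod m) : Bmon K m q (i, 0, 0) = xe K m q i := by
  show gam K m q i 0 * del K m q (i + ((0:ℕ) : ZMod m) - ((0:ℕ) : ZMod m)) 0 = xe K m q i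
  simp only [Nat.cast_zero, add_zero, sub_zero]
  show xe K m q i * xe K m q i = xe K m q i
  rw [xe_mul_xe, if_pos rfl]

lemma xe_mul_B (j : ZMod m) (p : ZMod m × ℕ × ℕ) :
    xe K m q j * Bmon K m q p = if j = p.1 then Bmon K m q p else 0 := by
  obtain ⟨i, s, t⟩ := p
  show xe K m q j * (gam K m q i s * _) = _
  rw [← mul_assoc, xe_mul_gam]
  split_ifs with h
  · rfl
  · rw [zero_mul]

lemma xa_mul_B (j : ZMod m) (p : ZMod m × ℕ × ℕ) :
    xa K m q j * Bmon K m q p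
      = if j + 1 = p.1 then Bmon K m q (j, p.2.1 + 1, p.2.2) else 0 := by
  obtain ⟨i, s, t⟩ := p
  show xa K m q j * (gam K m q i s * _) = _
  rw [← mul_assoc, xa_mul_gam]
  split_ifs with h
  · subst h
    show gam K m q j (s + 1) * del K m q (j + 1 + (s : ZMod m) - (t : ZMod m)) t = _
    have : j + 1 + (s : ZMod m) - (t : ZMod m)
        = j + ((s + 1 : ℕ) : ZMod m) - (t : ZMod m) := by push_cast; ring
    rw [this]
    rfl
  · rw [zero_mul]

lemma xb_mul_B (j : ZMod m) (p : ZMod m × ℕ × ℕ) :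
    xb K m q j * Bmon K m q p
      = if j = p.1 then
          ((-1 : K) ^ p.2.1 * (Qb K m q (j + 1) p.2.1)⁻¹) • Bmon K m q (j + 1, p.2.1, p.2.2 + 1)
        else 0 := by
  obtain ⟨i, s, t⟩ := p
  show xb K m q j * (gam K m q i s * del K m q (i + (s : ZMod m) - (t : ZMod m)) t) = _
  rw [← mul_assoc]
  split_ifs with h
  · subst h
    rw [xb_mul_gam_self, smul_mul_assoc, mul_assoc]
    have h2 : xb K m q (j + (s : ZMod m)) * del K m q (j + (s : ZMod m) - (t : ZMod m)) t
        = del K m q (j + (s : ZMod m) - (t : ZMod m)) (t + 1) := by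
      have h3 := xb_mul_del K m q (j + (s : ZMod m) - (t : ZMod m)) t
      rw [sub_add_cancel] at h3
      exact h3
    rw [h2]
    have h4 : j + (s : ZMod m) - (t : ZMod m)
        = (j + 1) + ((s : ℕ) : ZMod m) - ((t + 1 : ℕ) : ZMod m) := by push_cast; ring
    rw [h4]
    rfl
  · rw [xb_mul_gam_ne K m q h, zero_mul]

lemma adjoin_gens_eq_top :
    Algebra.adjoin K (Set.range (fun g : Gen m =>
      RingQuot.mkAlgHom K (ExtRel K m q) (RingQuot.mkAlgHom K (PathRel K m)
        (FreeAlgebra.ι K g)))) = ⊤ := by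
  set f : FA K m →ₐ[K] ExtAlg K m q :=
    (RingQuot.mkAlgHom K (ExtRel K m q)).comp (RingQuot.mkAlgHom K (PathRel K m)) with hf
  have hsurj : Function.Surjective f :=
    (RingQuot.mkAlgHom_surjective K _).comp (RingQuot.mkAlgHom_surjective K _)
  have hr : Set.range (fun g : Gen m =>
      RingQuot.mkAlgHom K (ExtRel K m q) (RingQuot.mkAlgHom K (PathRel K m)
        (FreeAlgebra.ι K g))) = f '' Set.range (FreeAlgebra.ι K) := by
    rw [← Set.range_comp]
    rfl
  rw [hr, ← AlgHom.map_adjoin, FreeAlgebra.adjoin_range_ι, Algebra.map_top]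
  exact (AlgHom.range_eq_top f).mpr hsurj


/-! ### The regular representation used for linear independence -/

abbrev VV := (ZMod m × ℕ × ℕ) →₀ K

lemma lift_single {X : Type} (f : X → VV K m) (x : X) (c : K) :
    Finsupp.lift (VV K m) K X f (Finsupp.single x c) = c • f x := by
  rw [Finsupp.lift_apply]
  rw [Finsupp.sum_single_index]
  rw [zero_smul]

def EEnd (i : ZMod m) : Module.End K (VV K m) :=
  Finsupp.lift (VV K m) K _ fun p => if p.1 = i then Finsupp.single p 1 else 0

def AEnd (i : ZMod m) : Module.End K (VV K m) :=
  Finsupp.lift (VV K m) K _ fun p =>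
    if p.1 = i + 1 then Finsupp.single (i, p.2.1 + 1, p.2.2) (1 : K) else 0

def BEnd (i : ZMod m) : Module.End K (VV K m) :=
  Finsupp.lift (VV K m) K _ fun p =>
    if p.1 = i then
      ((-1 : K) ^ p.2.1 * (Qb K m q (i + 1) p.2.1)⁻¹) •
        Finsupp.single (i + 1, p.2.1, p.2.2 + 1) (1 : K)
    else 0

lemma EEnd_single (i : ZMod m) (p : ZMod m × ℕ × ℕ) (c : K) :
    EEnd K m i (Finsupp.single p c) = if p.1 = i then Finsupp.single p c else 0 := by
  rw [EEnd, lift_single]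
  split_ifs with h
  · rw [Finsupp.smul_single' c p 1, mul_one]
  · rw [smul_zero]

lemma AEnd_single (i : ZMod m) (p : ZMod m × ℕ × ℕ) (c : K) :
    AEnd K m i (Finsupp.single p c)
      = if p.1 = i + 1 then Finsupp.single (i, p.2.1 + 1, p.2.2) c else 0 := by
  rw [AEnd, lift_single]
  split_ifs with h
  · rw [Finsupp.smul_single', mul_one]
  · rw [smul_zero]

lemma BEnd_single (i : ZMod m) (p : ZMod m × ℕ × ℕ) (c : K) :
    BEnd K m q i (Finsupp.single p c)
      = if p.1 = i then
          (c * ((-1 : K) ^ p.2.1 * (Qb K m q (i + 1) p.2.1)⁻¹)) •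
            Finsupp.single (i + 1, p.2.1, p.2.2 + 1) (1 : K)
        else 0 := by
  rw [BEnd, lift_single]
  split_ifs with h
  · rw [smul_smul]
  · rw [smul_zero]

def genEnd : Gen m → Module.End K (VV K m)
  | .e i => EEnd K m i
  | .a i => AEnd K m i
  | .abar i => BEnd K m q i

lemma pathCompat : ∀ ⦃x y : FA K m⦄, PathRel K m x y →
    FreeAlgebra.lift K (genEnd K m q) x = FreeAlgebra.lift K (genEnd K m q) y := by
  intro x y h
  induction h with
  | orth i j hij =>
    simp only [Ee, map_mul, map_zero, FreeAlgebra.lift_ι_apply, genEnd]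
    refine Finsupp.lhom_ext fun p c => ?_
    rw [Module.End.mul_apply, LinearMap.zero_apply, EEnd_single]
    by_cases h1 : p.1 = j
    · rw [if_pos h1, EEnd_single, if_neg (show ¬ p.1 = i by rw [h1]; exact Ne.symm hij)]
    · rw [if_neg h1, map_zero]
  | idem i =>
    simp only [Ee, map_mul, FreeAlgebra.lift_ι_apply, genEnd]
    refine Finsupp.lhom_ext fun p c => ?_
    rw [Module.End.mul_apply, EEnd_single]
    by_cases h1 : p.1 = i
    · rw [if_pos h1, EEnd_single, if_pos h1]
    · rw [if_neg h1, map_zero]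
  | total =>
    simp only [Ee, map_sum, map_one, FreeAlgebra.lift_ι_apply, genEnd]
    refine Finsupp.lhom_ext fun p c => ?_
    rw [LinearMap.sum_apply, Module.End.one_apply]
    rw [Finset.sum_congr rfl fun i _ => EEnd_single K m i p c]
    rw [Finset.sum_ite_eq Finset.univ p.1 (fun _ => Finsupp.single p c)]
    rw [if_pos (Finset.mem_univ p.1)]
  | asrc i =>
    simp only [Ee, Aa, map_mul, FreeAlgebra.lift_ι_apply, genEnd]
    refine Finsupp.lhom_ext fun p c => ?_
    rw [Module.End.mul_apply, AEnd_single]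
    by_cases h1 : p.1 = i + 1
    · rw [if_pos h1, EEnd_single, if_pos rfl]
    · rw [if_neg h1, map_zero]
  | atgt i =>
    simp only [Ee, Aa, map_mul, FreeAlgebra.lift_ι_apply, genEnd]
    refine Finsupp.lhom_ext fun p c => ?_
    rw [Module.End.mul_apply, EEnd_single]
    by_cases h1 : p.1 = i + 1
    · rw [if_pos h1]
    · rw [if_neg h1, map_zero, AEnd_single, if_neg h1]
  | bsrc i =>
    simp only [Ee, Bb, map_mul, FreeAlgebra.lift_ι_apply, genEnd]
    refine Finsupp.lhom_ext fun p c => ?_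
    rw [Module.End.mul_apply, BEnd_single]
    by_cases h1 : p.1 = i
    · rw [if_pos h1, map_smul, EEnd_single, if_pos rfl]
    · rw [if_neg h1, map_zero]
  | btgt i =>
    simp only [Ee, Bb, map_mul, FreeAlgebra.lift_ι_apply, genEnd]
    refine Finsupp.lhom_ext fun p c => ?_
    rw [Module.End.mul_apply, EEnd_single]
    by_cases h1 : p.1 = i
    · rw [if_pos h1]
    · rw [if_neg h1, map_zero, BEnd_single, if_neg h1]

def repPath : PathAlg K m →ₐ[K] Module.End K (VV K m) :=
  RingQuot.liftAlgHom K ⟨FreeAlgebra.lift K (genEnd K m q), pathCompat K m q⟩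

lemma repPath_pa (i : ZMod m) : repPath K m q (pa K m i) = AEnd K m i := by
  rw [repPath, pa, RingQuot.liftAlgHom_mkAlgHom_apply, Aa, FreeAlgebra.lift_ι_apply]
  rfl

lemma repPath_pb (i : ZMod m) : repPath K m q (pb K m i) = BEnd K m q i := by
  rw [repPath, pb, RingQuot.liftAlgHom_mkAlgHom_apply, Bb, FreeAlgebra.lift_ι_apply]
  rfl

lemma extCompat : ∀ ⦃x y : PathAlg K m⦄, ExtRel K m q x y →
    repPath K m q x = repPath K m q y := by
  intro x y h
  cases h with
  | rel i =>
    simp only [map_add, map_smul, map_mul, map_zero, repPath_pa, repPath_pb]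
    refine Finsupp.lhom_ext fun p c => ?_
    obtain ⟨pi, s, t⟩ := p
    rw [LinearMap.zero_apply, LinearMap.add_apply, LinearMap.smul_apply,
      Module.End.mul_apply, Module.End.mul_apply, BEnd_single, AEnd_single]
    by_cases h1 : pi = i
    · rw [if_pos (show ((pi, s, t) : ZMod m × ℕ × ℕ).1 = i from h1),
        if_pos (show ((pi, s, t) : ZMod m × ℕ × ℕ).1 = i - 1 + 1 by
          rw [sub_add_cancel]; exact h1)]
      rw [map_smul, AEnd_single, BEnd_single,
        if_pos (show ((i + 1 : ZMod m), s, t + 1).1 = i + 1 from rfl),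
        if_pos (show ((i - 1 : ZMod m), s + 1, t).1 = i - 1 from rfl)]
      rw [sub_add_cancel, smul_smul, ← add_smul]
      have hz : (q i)⁻¹ * (c * ((-1 : K) ^ s * (Qb K m q (i + 1) s)⁻¹))
          + c * ((-1 : K) ^ (s + 1) * (Qb K m q i (s + 1))⁻¹) = 0 := by
        rw [Qb_succ, mul_inv, pow_succ]
        ring
      rw [hz, zero_smul]
    · rw [if_neg (show ¬ ((pi, s, t) : ZMod m × ℕ × ℕ).1 = i from h1),
        if_neg (show ¬ ((pi, s, t) : ZMod m × ℕ × ℕ).1 = i - 1 + 1 by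
          rw [sub_add_cancel]; exact h1)]
      rw [map_zero, map_zero, smul_zero, add_zero]

def rep : ExtAlg K m q →ₐ[K] Module.End K (VV K m) :=
  RingQuot.liftAlgHom K ⟨repPath K m q, extCompat K m q⟩

lemma rep_xe (i : ZMod m) : rep K m q (xe K m q i) = EEnd K m i := by
  rw [rep, xe, RingQuot.liftAlgHom_mkAlgHom_apply, repPath, pe,
    RingQuot.liftAlgHom_mkAlgHom_apply, Ee, FreeAlgebra.lift_ι_apply]
  rfl

lemma rep_xa (i : ZMod m) : rep K m q (xa K m q i) = AEnd K m i := by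
  rw [rep, xa, RingQuot.liftAlgHom_mkAlgHom_apply, repPath_pa]

lemma rep_xb (i : ZMod m) : rep K m q (xb K m q i) = BEnd K m q i := by
  rw [rep, xb, RingQuot.liftAlgHom_mkAlgHom_apply, repPath_pb]

lemma rep_del (j j' : ZMod m) (t : ℕ) :
    rep K m q (del K m q j t) (Finsupp.single (j', 0, 0) (1 : K))
      = if j' = j then Finsupp.single (j + (t : ZMod m), 0, t) (1 : K) else 0 := by
  induction t with
  | zero =>
    show rep K m q (xe K m q j) _ = _
    rw [rep_xe, EEnd_single]
    split_ifs with h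
    · subst h
      simp
    · rfl
  | succ n ih =>
    show rep K m q (xb K m q (j + (n : ZMod m)) * del K m q j n) _ = _
    rw [map_mul, Module.End.mul_apply, ih]
    split_ifs with h
    · rw [rep_xb, BEnd_single, if_pos rfl]
      have hc : (j + (n : ZMod m) + 1) = j + ((n + 1 : ℕ) : ZMod m) := by push_cast; ring
      simp [hc]
    · simp

lemma rep_gam (s : ℕ) : ∀ (i : ZMod m) (s' t : ℕ),
    rep K m q (gam K m q i s) (Finsupp.single (i + (s : ZMod m), s', t) (1 : K))
      = Finsupp.single (i, s + s', t) (1 : K) := by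
  induction s with
  | zero =>
    intro i s' t
    show rep K m q (xe K m q i) _ = _
    rw [rep_xe]
    have h0 : i + ((0 : ℕ) : ZMod m) = i := by push_cast; ring
    rw [h0, EEnd_single, if_pos rfl]
    simp
  | succ n ih =>
    intro i s' t
    show rep K m q (xa K m q i * gam K m q (i + 1) n) _ = _
    have hc : i + ((n + 1 : ℕ) : ZMod m) = (i + 1) + (n : ZMod m) := by push_cast; ring
    rw [map_mul, Module.End.mul_apply, hc, ih (i + 1), rep_xa, AEnd_single, if_pos rfl]
    have : n + s' + 1 = n + 1 + s' := by omega
    rw [this]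

def Lmap : ExtAlg K m q →ₗ[K] VV K m where
  toFun x := ∑ j : ZMod m, rep K m q x (Finsupp.single (j, 0, 0) (1 : K))
  map_add' x y := by
    simp only [map_add, LinearMap.add_apply]
    rw [Finset.sum_add_distrib]
  map_smul' c x := by
    simp only [map_smul, LinearMap.smul_apply, RingHom.id_apply]
    rw [Finset.smul_sum]

lemma Lmap_B (p : ZMod m × ℕ × ℕ) :
    Lmap K m q (Bmon K m q p) = Finsupp.single p (1 : K) := by
  obtain ⟨i, s, t⟩ := p
  show (∑ j : ZMod m, rep K m q (gam K m q i s *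
      del K m q (i + (s : ZMod m) - (t : ZMod m)) t) (Finsupp.single (j, 0, 0) (1 : K))) = _
  have step : ∀ j : ZMod m,
      rep K m q (gam K m q i s * del K m q (i + (s : ZMod m) - (t : ZMod m)) t)
        (Finsupp.single (j, 0, 0) (1 : K))
      = if j = i + (s : ZMod m) - (t : ZMod m)
          then Finsupp.single (i, s, t) (1 : K) else 0 := by
    intro j
    rw [map_mul, Module.End.mul_apply, rep_del]
    split_ifs with h
    · have hv : i + (s : ZMod m) - (t : ZMod m) + (t : ZMod m) = i + (s : ZMod m) := by ring
      rw [hv, rep_gam]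
      rw [Nat.add_zero]
    · simp
  rw [Finset.sum_congr rfl fun j _ => step j]
  rw [Finset.sum_ite_eq' Finset.univ (i + (s : ZMod m) - (t : ZMod m))
    (fun _ => Finsupp.single (i, s, t) (1 : K))]
  simp

lemma Bmon_linearIndependent : LinearIndependent K (Bmon K m q) := by
  refine (linearIndependent_iff (R := K) (v := Bmon K m q)).mpr (fun l hl => ?_)
  have h2 := congrArg (Lmap K m q) hl
  rw [map_zero, Finsupp.apply_linearCombination] at h2
  have hcomp : (Lmap K m q) ∘ (Bmon K m q) = fun p => Finsupp.single p (1 : K) :=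
    funext fun p => Lmap_B K m q p
  rw [hcomp] at h2
  have hid : Finsupp.linearCombination K
      (fun p : ZMod m × ℕ × ℕ => Finsupp.single p (1 : K)) l = l := by
    rw [Finsupp.linearCombination_apply]
    simp only [Finsupp.smul_single', mul_one]
    exact Finsupp.sum_single l
  rw [hid] at h2
  exact h2

lemma Bmon_span : Submodule.span K (Set.range (Bmon K m q)) = ⊤ := by
  set S := Submodule.span K (Set.range (Bmon K m q)) with hS
  have hBS : ∀ p, Bmon K m q p ∈ S := fun p =>
    Submodule.subset_span (Set.mem_range_self p)
  have hmul : ∀ g : Gen m,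
      ∀ y ∈ S, (RingQuot.mkAlgHom K (ExtRel K m q) (RingQuot.mkAlgHom K (PathRel K m)
        (FreeAlgebra.ι K g))) * y ∈ S := by
    intro g y hy
    induction hy using Submodule.span_induction with
    | mem x hx =>
      obtain ⟨p, rfl⟩ := hx
      cases g with
      | e i =>
        have : RingQuot.mkAlgHom K (ExtRel K m q) (RingQuot.mkAlgHom K (PathRel K m)
            (FreeAlgebra.ι K (Gen.e i))) = xe K m q i := rfl
        rw [this, xe_mul_B]
        split_ifs
        · exact hBS p
        · exact S.zero_mem
      | a i =>
        have : RingQuot.mkAlgHom K (ExtRel K m q) (RingQuot.mkAlgHom K (PathRel K m)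
            (FreeAlgebra.ι K (Gen.a i))) = xa K m q i := rfl
        rw [this, xa_mul_B]
        split_ifs
        · exact hBS _
        · exact S.zero_mem
      | abar i =>
        have : RingQuot.mkAlgHom K (ExtRel K m q) (RingQuot.mkAlgHom K (PathRel K m)
            (FreeAlgebra.ι K (Gen.abar i))) = xb K m q i := rfl
        rw [this, xb_mul_B]
        split_ifs
        · exact S.smul_mem _ (hBS _)
        · exact S.zero_mem
    | zero => rw [mul_zero]; exact S.zero_mem
    | add x y hx hy ihx ihy => rw [mul_add]; exact S.add_mem ihx ihy
    | smul a x hx ihx => rw [mul_smul_comm]; exact S.smul_mem a ihx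
  let T : Subalgebra K (ExtAlg K m q) :=
    { carrier := {x | ∀ y ∈ S, x * y ∈ S}
      mul_mem' := fun {a b} ha hb y hy => by
        rw [mul_assoc]; exact ha _ (hb _ hy)
      one_mem' := fun y hy => by rw [one_mul]; exact hy
      add_mem' := fun {a b} ha hb y hy => by
        rw [add_mul]; exact S.add_mem (ha _ hy) (hb _ hy)
      algebraMap_mem' := fun r y hy => by
        rw [← Algebra.smul_def]; exact S.smul_mem r hy }
  have hT : ∀ x : ExtAlg K m q, x ∈ T := by
    intro x
    have hle : Algebra.adjoin K (Set.range (fun g : Gen m =>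
        RingQuot.mkAlgHom K (ExtRel K m q) (RingQuot.mkAlgHom K (PathRel K m)
          (FreeAlgebra.ι K g)))) ≤ T := by
      apply Algebra.adjoin_le
      rintro _ ⟨g, rfl⟩
      exact hmul g
    rw [adjoin_gens_eq_top K m q] at hle
    exact hle (by trivial)
  have h1S : (1 : ExtAlg K m q) ∈ S := by
    rw [one_eq_sum K m q]
    refine Submodule.sum_mem _ fun i _ => ?_
    rw [← Bmon_e K m q i]
    exact hBS _
  rw [eq_top_iff]
  intro x _
  have := hT x 1 h1S
  rwa [mul_one] at this

end ExtBasisAux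



/-- the monomials `γ_i^s δ_{i+s-t}^t` (for `i ∈ ZMod m`, `s, t ≥ 0`) form a
`K`-vector space basis of `E(Λ_q)`. -/
theorem ext_algebra_monomial_basis
    (K : Type) [Field K] (m : ℕ) [NeZero m] (hm : 1 ≤ m)
    (q : ZMod m → K) (hq : ∀ i, q i ≠ 0) :
    let B : ZMod m × ℕ × ℕ → ExtAlg K m q := fun p =>
      gam K m q p.1 p.2.1 * del K m q (p.1 + (p.2.1 : ZMod m) - (p.2.2 : ZMod m)) p.2.2
    LinearIndependent K B ∧ Submodule.span K (Set.range B) = ⊤ := by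
  intro B
  exact ⟨ExtBasisAux.Bmon_linearIndependent K m q,
    ExtBasisAux.Bmon_span K m q⟩
end
end

section
/- Let N ≥ 1 be any multiple of m, and set x = Σ_{i=0}^{m−1} γ_i^{N} and y = Σ_{i=0}^{m−1} δ_i^{N} in E(Λ_q). Then for every n ≥ 0, the n+1 elements x^i y^{n−i}, 0 ≤ i ≤ n, are linearly independent over K in E(Λ_q). -/
open scoped BigOperators

noncomputable section

/-
E(Λ_q) acts on the vector space with basis indexed by triples (i, s, t): `a` raises `s`,
`ā` raises `t` and moves the vertex on, with a sign and a product of the `q_k⁻¹` chosen so that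
`q_i⁻¹ a_i ā_i + ā_{i-1} a_{i-1}` acts by zero. Since `m ∣ N`, `x` raises `s` by `N` and, on
vectors with `s = 0`, `y` raises `t` by `N`. Hence `x^i y^(n-i)` sends the basis vector
`(0, 0, 0)` to the basis vector `(0, N i, N (n - i))`, and these are distinct for distinct `i`.
-/

namespace ExtAlgRep

open Finsupp

abbrev Rep (K : Type) [Field K] (m : ℕ) : Type := (ZMod m × ℕ × ℕ) →₀ K

section Operators

variable (K : Type) [Field K] {m : ℕ}

def abarCoef (q : ZMod m → K) (j : ZMod m) (s : ℕ) : K :=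
  (-1 : K) ^ s * (∏ k ∈ Finset.range s, q (j + ((k + 1 : ℕ) : ZMod m)))⁻¹

def eOp (i : ZMod m) : Module.End K (Rep K m) :=
  linearCombination K fun p => if p.1 = i then single p 1 else 0

def aOp (i : ZMod m) : Module.End K (Rep K m) :=
  linearCombination K fun p => if p.1 = i + 1 then single (i, p.2.1 + 1, p.2.2) 1 else 0

def abarOp (q : ZMod m → K) (i : ZMod m) : Module.End K (Rep K m) :=
  linearCombination K fun p =>
    if p.1 = i then abarCoef K q i p.2.1 • single (i + 1, p.2.1, p.2.2 + 1) 1 else 0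

variable {K}

lemma eOp_single (i : ZMod m) (p : ZMod m × ℕ × ℕ) :
    eOp K i (single p 1) = if p.1 = i then single p 1 else 0 := by
  simp only [eOp, linearCombination_single, one_smul]

lemma aOp_single (i : ZMod m) (p : ZMod m × ℕ × ℕ) :
    aOp K i (single p 1) = if p.1 = i + 1 then single (i, p.2.1 + 1, p.2.2) 1 else 0 := by
  simp only [aOp, linearCombination_single, one_smul]

lemma abarOp_single (q : ZMod m → K) (i : ZMod m) (p : ZMod m × ℕ × ℕ) :
    abarOp K q i (single p 1) =
      if p.1 = i then abarCoef K q i p.2.1 • single (i + 1, p.2.1, p.2.2 + 1) 1 else 0 := by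
  simp only [abarOp, linearCombination_single, one_smul]

lemma end_ext {f g : Module.End K (Rep K m)} (h : ∀ p, f (single p 1) = g (single p 1)) :
    f = g :=
  lhom_ext' fun p => LinearMap.ext_ring (h p)

lemma eOp_mul_eOp_of_ne {i j : ZMod m} (hij : i ≠ j) : eOp K i * eOp K j = 0 :=
  end_ext fun p => by
    by_cases h : p.1 = j
    · simp [eOp_single, h, hij.symm]
    · simp [eOp_single, h]

lemma eOp_mul_self (i : ZMod m) : eOp K i * eOp K i = eOp K i :=
  end_ext fun p => by by_cases h : p.1 = i <;> simp [eOp_single, h]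

lemma sum_eOp [NeZero m] : ∑ i : ZMod m, eOp K i = 1 :=
  end_ext fun p => by simp [eOp_single]

lemma eOp_mul_aOp (i : ZMod m) : eOp K i * aOp K i = aOp K i :=
  end_ext fun p => by by_cases h : p.1 = i + 1 <;> simp [eOp_single, aOp_single, h]

lemma aOp_mul_eOp (i : ZMod m) : aOp K i * eOp K (i + 1) = aOp K i :=
  end_ext fun p => by by_cases h : p.1 = i + 1 <;> simp [eOp_single, aOp_single, h]

lemma eOp_mul_abarOp (q : ZMod m → K) (i : ZMod m) :
    eOp K (i + 1) * abarOp K q i = abarOp K q i :=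
  end_ext fun p => by
    by_cases h : p.1 = i <;>
      simp only [Module.End.mul_apply, abarOp_single, h, if_true, if_false, map_smul, map_zero,
        eOp_single]

lemma abarOp_mul_eOp (q : ZMod m → K) (i : ZMod m) : abarOp K q i * eOp K i = abarOp K q i :=
  end_ext fun p => by by_cases h : p.1 = i <;> simp [eOp_single, abarOp_single, h]

lemma abarCoef_pred_succ (q : ZMod m → K) (i : ZMod m) (s : ℕ) :
    abarCoef K q (i - 1) (s + 1) = -((q i)⁻¹ * abarCoef K q i s) := by
  have hprod : ∏ k ∈ Finset.range (s + 1), q (i - 1 + ((k + 1 : ℕ) : ZMod m)) =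
      (∏ k ∈ Finset.range s, q (i + ((k + 1 : ℕ) : ZMod m))) * q i := by
    rw [Finset.prod_range_succ']
    push_cast
    ring_nf
  rw [abarCoef, abarCoef, hprod, pow_succ, mul_inv]
  ring

lemma ext_relation (q : ZMod m → K) (i : ZMod m) :
    (q i)⁻¹ • (aOp K i * abarOp K q i) + abarOp K q (i - 1) * aOp K (i - 1) = 0 :=
  end_ext fun p => by
    have hi : i - 1 + 1 = i := sub_add_cancel i 1
    by_cases h : p.1 = i
    · simp only [LinearMap.add_apply, LinearMap.smul_apply, Module.End.mul_apply, abarOp_single,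
        aOp_single, h, hi, if_true, map_smul, abarCoef_pred_succ, smul_smul, ← add_smul]
      simp
    · simp [abarOp_single, aOp_single, h, hi]

def genOp (q : ZMod m → K) : Gen m → Module.End K (Rep K m)
  | .e i => eOp K i
  | .a i => aOp K i
  | .abar i => abarOp K q i

end Operators

section Representation

variable {K : Type} [Field K] {m : ℕ} [NeZero m] (q : ZMod m → K)

def freeRep : FA K m →ₐ[K] Module.End K (Rep K m) := FreeAlgebra.lift K (genOp q)

lemma freeRep_sound ⦃x y : FA K m⦄ (h : PathRel K m x y) : freeRep q x = freeRep q y := by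
  cases h with
  | orth i j hij => simpa [freeRep, genOp, Ee] using eOp_mul_eOp_of_ne hij
  | idem i => simpa [freeRep, genOp, Ee] using eOp_mul_self i
  | total => simpa [freeRep, genOp, Ee] using sum_eOp
  | asrc i => simpa [freeRep, genOp, Ee, Aa] using eOp_mul_aOp i
  | atgt i => simpa [freeRep, genOp, Ee, Aa] using aOp_mul_eOp i
  | bsrc i => simpa [freeRep, genOp, Ee, Bb] using eOp_mul_abarOp q i
  | btgt i => simpa [freeRep, genOp, Ee, Bb] using abarOp_mul_eOp q i

def pathRep : PathAlg K m →ₐ[K] Module.End K (Rep K m) :=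
  RingQuot.liftAlgHom K ⟨freeRep q, freeRep_sound q⟩

lemma pathRep_pe (i : ZMod m) : pathRep q (pe K m i) = eOp K i := by
  simp [pathRep, pe, freeRep, genOp, Ee]

lemma pathRep_pa (i : ZMod m) : pathRep q (pa K m i) = aOp K i := by
  simp [pathRep, pa, freeRep, genOp, Aa]

lemma pathRep_pb (i : ZMod m) : pathRep q (pb K m i) = abarOp K q i := by
  simp [pathRep, pb, freeRep, genOp, Bb]

lemma pathRep_sound ⦃x y : PathAlg K m⦄ (h : ExtRel K m q x y) : pathRep q x = pathRep q y := by
  cases h with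
  | rel i => simpa [pathRep_pa, pathRep_pb] using ext_relation q i

def extRep : ExtAlg K m q →ₐ[K] Module.End K (Rep K m) :=
  RingQuot.liftAlgHom K ⟨pathRep q, pathRep_sound q⟩

lemma extRep_xe (i : ZMod m) : extRep q (xe K m q i) = eOp K i := by
  simp [extRep, xe, pathRep_pe]

lemma extRep_xa (i : ZMod m) : extRep q (xa K m q i) = aOp K i := by
  simp [extRep, xa, pathRep_pa]

lemma extRep_xb (i : ZMod m) : extRep q (xb K m q i) = abarOp K q i := by
  simp [extRep, xb, pathRep_pb]

lemma extRep_gam_single (j : ZMod m) (k : ℕ) (i : ZMod m) (s t : ℕ) :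
    extRep q (gam K m q j k) (single (i, s, t) 1) =
      if i = j + k then single (j, s + k, t) 1 else 0 := by
  induction k generalizing j with
  | zero => by_cases h : i = j <;> simp [gam, extRep_xe, eOp_single, h]
  | succ k ih =>
    have hj : j + 1 + k = j + ↑(k + 1) := by push_cast; ring
    rw [gam, map_mul, Module.End.mul_apply, ih, extRep_xa, ← hj]
    split_ifs
    · simp [aOp_single, add_assoc]
    · exact map_zero _

lemma extRep_del_single (j : ZMod m) (k : ℕ) (i : ZMod m) (t : ℕ) :
    extRep q (del K m q j k) (single (i, 0, t) 1) =
      if i = j then single (j + k, 0, t + k) 1 else 0 := by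
  induction k with
  | zero => by_cases h : i = j <;> simp [del, extRep_xe, eOp_single, h]
  | succ k ih =>
    by_cases h : i = j
    · subst h
      simp [del, extRep_xb, ih, abarOp_single, abarCoef, add_assoc]
    · simp [del, extRep_xb, ih, h]

variable {q} {N : ℕ}

lemma extRep_sum_gam_single (hN : (N : ZMod m) = 0) (i : ZMod m) (s t : ℕ) :
    extRep q (∑ j : ZMod m, gam K m q j N) (single (i, s, t) 1) = single (i, s + N, t) 1 := by
  simp [extRep_gam_single, hN]

lemma extRep_sum_del_single (hN : (N : ZMod m) = 0) (i : ZMod m) (t : ℕ) :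
    extRep q (∑ j : ZMod m, del K m q j N) (single (i, 0, t) 1) = single (i, 0, t + N) 1 := by
  simp [extRep_del_single, hN]

lemma extRep_sum_gam_pow_single (hN : (N : ZMod m) = 0) (k : ℕ) (i : ZMod m) (s t : ℕ) :
    extRep q ((∑ j : ZMod m, gam K m q j N) ^ k) (single (i, s, t) 1) =
      single (i, s + N * k, t) 1 := by
  induction k with
  | zero => simp
  | succ k ih => rw [pow_succ', map_mul, Module.End.mul_apply, ih, extRep_sum_gam_single hN,
      mul_add_one, add_assoc]

lemma extRep_sum_del_pow_single (hN : (N : ZMod m) = 0) (k : ℕ) (i : ZMod m) (t : ℕ) :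
    extRep q ((∑ j : ZMod m, del K m q j N) ^ k) (single (i, 0, t) 1) =
      single (i, 0, t + N * k) 1 := by
  induction k with
  | zero => simp
  | succ k ih => rw [pow_succ', map_mul, Module.End.mul_apply, ih, extRep_sum_del_single hN,
      mul_add_one, add_assoc]

end Representation

end ExtAlgRep

open ExtAlgRep Finsupp in
theorem powers_xy_linearly_independent_general
    (K : Type) [Field K] (m : ℕ) [NeZero m]
    (q : ZMod m → K)
    (N : ℕ) (hN1 : 1 ≤ N) (hNm : m ∣ N) (n : ℕ) :
    LinearIndependent K (fun i : Fin (n + 1) =>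
      (∑ j : ZMod m, gam K m q j N) ^ (i : ℕ) *
        (∑ j : ZMod m, del K m q j N) ^ (n - (i : ℕ))) := by
  have hN : (N : ZMod m) = 0 := (ZMod.natCast_eq_zero_iff N m).mpr hNm
  let image (i : Fin (n + 1)) : ZMod m × ℕ × ℕ := (0, N * i, N * (n - i))
  have himage_inj : Function.Injective image := fun i j h =>
    Fin.ext (Nat.eq_of_mul_eq_mul_left hN1 (Prod.ext_iff.mp (Prod.ext_iff.mp h).2).1)
  refine LinearIndependent.of_comp
    (LinearMap.applyₗ (single (0, 0, 0) 1) ∘ₗ (extRep q).toLinearMap) ?_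
  convert (linearIndependent_single_one K (ZMod m × ℕ × ℕ)).comp image himage_inj using 1
  funext i
  change extRep q (_ * _) (single (0, 0, 0) 1) = single (image i) 1
  rw [map_mul, Module.End.mul_apply, extRep_sum_del_pow_single hN, extRep_sum_gam_pow_single hN,
    zero_add, zero_add]

/-- for `N ≥ 1` a multiple of `m`, with `x = Σ_i γ_i^N` and `y = Σ_i δ_i^N`,
the elements `x^i y^{n-i}` (`0 ≤ i ≤ n`) are linearly independent over `K` in `E(Λ_q)`. -/
theorem powers_xy_linearly_independent
    (K : Type) [Field K] (m : ℕ) [NeZero m] (hm : 1 ≤ m)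
    (q : ZMod m → K) (hq : ∀ i, q i ≠ 0)
    (N : ℕ) (hN1 : 1 ≤ N) (hNm : m ∣ N) (n : ℕ) :
    LinearIndependent K (fun i : Fin (n + 1) =>
      (∑ j : ZMod m, gam K m q j N) ^ (i : ℕ) *
        (∑ j : ZMod m, del K m q j N) ^ (n - (i : ℕ))) :=
  powers_xy_linearly_independent_general K m q N hN1 hNm n
end
end

section
/- Let z = Σ_{i=0}^{m−1} c_i γ_i^{s_i} δ_i^{t_i} be a nonzero element of E(Λ_q), where c_i ∈ K and s_i, t_i ≥ 0 satisfy s_i ≡ t_i (mod m), s_i + t_i = s_0 + t_0 and s_i − t_i = s_0 − t_0 for all i. Suppose z g = (−1)^{(s_0+t_0) n'} g z for every homogeneous element g of E(Λ_q) of every path-length degree n'. Then: c_i ≠ 0 for all i; s_i = s_0 and t_i = t_0 for all i; c_{j+1} = (−1)^{s_0} (q_{j+1} ⋯ q_{j+t_0})^{-1} c_j = (−1)^{t_0} (q_{j+1} ⋯ q_{j+s_0})^{-1} c_j for all j (indices modulo m); and ζ^{t_0} = (−1)^{m s_0} and ζ^{s_0} = (−1)^{m t_0} in K. -/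
open scoped BigOperators

noncomputable section

section Machinery
set_option linter.unusedSectionVars false
variable (K : Type) [Field K] (m : ℕ) [NeZero m] (q : ZMod m → K)

abbrev Md : Type := (ZMod m × ℕ × ℕ) →₀ K

def eAct (i : ZMod m) : Module.End K (Md K m) :=
  Finsupp.lsum K fun p => if p.1 = i then Finsupp.lsingle p else 0

def aAct (i : ZMod m) : Module.End K (Md K m) :=
  Finsupp.lsum K fun p => if p.1 = i + 1 then Finsupp.lsingle (p.1 - 1, p.2.1 + 1, p.2.2) else 0

def Qb (p : ZMod m) (s : ℕ) : K := ∏ l ∈ Finset.range s, q (p + ((l+1 : ℕ) : ZMod m))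

def bAct (i : ZMod m) : Module.End K (Md K m) :=
  Finsupp.lsum K fun p => if p.1 = i then
    ((-1:K) ^ p.2.1 * (Qb K m q p.1 p.2.1)⁻¹) • Finsupp.lsingle (p.1 + 1, p.2.1, p.2.2 + 1) else 0

lemma eAct_single (i : ZMod m) (p : ZMod m × ℕ × ℕ) (k : K) :
    eAct K m i (Finsupp.single p k) = if p.1 = i then Finsupp.single p k else 0 := by
  rw [eAct, Finsupp.lsum_single]; split <;> simp

lemma aAct_single (i : ZMod m) (p : ZMod m × ℕ × ℕ) (k : K) :
    aAct K m i (Finsupp.single p k) =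
      if p.1 = i + 1 then Finsupp.single (p.1 - 1, p.2.1 + 1, p.2.2) k else 0 := by
  rw [aAct, Finsupp.lsum_single]; split <;> simp

lemma bAct_single (i : ZMod m) (p : ZMod m × ℕ × ℕ) (k : K) :
    bAct K m q i (Finsupp.single p k) =
      if p.1 = i then ((-1:K) ^ p.2.1 * (Qb K m q p.1 p.2.1)⁻¹) •
        Finsupp.single (p.1 + 1, p.2.1, p.2.2 + 1) k else 0 := by
  rw [bAct, Finsupp.lsum_single]; split <;> simp [Finsupp.smul_single]

def genAct : Gen m → Module.End K (Md K m)
  | .e i => eAct K m i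
  | .a i => aAct K m i
  | .abar i => bAct K m q i

def fAct : FA K m →ₐ[K] Module.End K (Md K m) := FreeAlgebra.lift K (genAct K m q)

lemma fAct_Ee (i : ZMod m) : fAct K m q (Ee K m i) = eAct K m i := by
  simp [fAct, Ee, genAct]
lemma fAct_Aa (i : ZMod m) : fAct K m q (Aa K m i) = aAct K m i := by
  simp [fAct, Aa, genAct]
lemma fAct_Bb (i : ZMod m) : fAct K m q (Bb K m i) = bAct K m q i := by
  simp [fAct, Bb, genAct]

lemma fAct_rel : ∀ x y, PathRel K m x y → fAct K m q x = fAct K m q y := by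
  intro x y h
  induction h with
  | orth i j hij =>
    simp only [map_mul, fAct_Ee, map_zero]
    apply Finsupp.lhom_ext; intro p k
    simp only [Module.End.mul_apply, LinearMap.zero_apply]
    rw [eAct_single]
    split
    · rename_i h1
      rw [eAct_single, if_neg (by rw [h1]; exact fun hh => hij hh.symm)]
    · exact map_zero _
  | idem i =>
    simp only [map_mul, fAct_Ee]
    apply Finsupp.lhom_ext; intro p k
    simp only [Module.End.mul_apply]
    rw [eAct_single]
    split
    · rename_i h1; rw [eAct_single, if_pos h1]
    · exact map_zero _
  | total =>
    simp only [map_sum, map_one, fAct_Ee]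
    apply Finsupp.lhom_ext; intro p k
    simp only [LinearMap.sum_apply, eAct_single, Module.End.one_apply]
    rw [Finset.sum_ite_eq]
    simp
  | asrc i =>
    simp only [map_mul, fAct_Ee, fAct_Aa]
    apply Finsupp.lhom_ext; intro p k
    simp only [Module.End.mul_apply]
    rw [aAct_single]
    split
    · rename_i h1
      rw [eAct_single, if_pos (by rw [h1]; simp)]
    · exact map_zero _
  | atgt i =>
    simp only [map_mul, fAct_Ee, fAct_Aa]
    apply Finsupp.lhom_ext; intro p k
    simp only [Module.End.mul_apply]
    rw [eAct_single]
    split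
    · rfl
    · rw [map_zero, aAct_single]; split <;> simp_all
  | bsrc i =>
    simp only [map_mul, fAct_Ee, fAct_Bb]
    apply Finsupp.lhom_ext; intro p k
    simp only [Module.End.mul_apply]
    rw [bAct_single]
    split
    · rename_i h1
      rw [map_smul, eAct_single,
        if_pos (show (p.1 + 1, p.2.1, p.2.2 + 1).1 = i + 1 by rw [h1])]
    · exact map_zero _
  | btgt i =>
    simp only [map_mul, fAct_Ee, fAct_Bb]
    apply Finsupp.lhom_ext; intro p k
    simp only [Module.End.mul_apply]
    rw [eAct_single]
    split
    · rfl
    · rw [map_zero, bAct_single]; split <;> simp_all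

def pAct : PathAlg K m →ₐ[K] Module.End K (Md K m) :=
  RingQuot.liftAlgHom K ⟨fAct K m q, fAct_rel K m q⟩

lemma pAct_pe (i : ZMod m) : pAct K m q (pe K m i) = eAct K m i := by
  rw [pe, pAct, RingQuot.liftAlgHom_mkAlgHom_apply, fAct_Ee]
lemma pAct_pa (i : ZMod m) : pAct K m q (pa K m i) = aAct K m i := by
  rw [pa, pAct, RingQuot.liftAlgHom_mkAlgHom_apply, fAct_Aa]
lemma pAct_pb (i : ZMod m) : pAct K m q (pb K m i) = bAct K m q i := by
  rw [pb, pAct, RingQuot.liftAlgHom_mkAlgHom_apply, fAct_Bb]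

lemma Qb_succ (i : ZMod m) (s : ℕ) : Qb K m q (i - 1) (s + 1) = q i * Qb K m q i s := by
  rw [Qb, Finset.prod_range_succ']
  rw [mul_comm]
  congr 1
  · push_cast; ring_nf
  · rw [Qb]
    apply Finset.prod_congr rfl
    intro l _
    congr 1
    push_cast
    ring

lemma pAct_rel : ∀ x y, ExtRel K m q x y → pAct K m q x = pAct K m q y := by
  intro x y h
  induction h with
  | rel i =>
    simp only [map_add, map_smul, map_mul, pAct_pa, pAct_pb, map_zero]
    apply Finsupp.lhom_ext; intro p k
    simp only [LinearMap.add_apply, LinearMap.smul_apply, Module.End.mul_apply,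
      LinearMap.zero_apply]
    rw [bAct_single, aAct_single]
    by_cases hp : p.1 = i
    · rw [if_pos hp, if_pos (by rw [sub_add_cancel, hp])]
      rw [map_smul, aAct_single,
        if_pos (show (p.1 + 1, p.2.1, p.2.2 + 1).1 = i + 1 by rw [hp]),
        bAct_single, if_pos (show (p.1 - 1, p.2.1 + 1, p.2.2).1 = i - 1 by rw [hp])]
      simp only
      rw [show p.1 + 1 - 1 = p.1 from add_sub_cancel_right p.1 1,
        show p.1 - 1 + 1 = p.1 from sub_add_cancel p.1 1]
      rw [smul_smul, ← add_smul]
      convert zero_smul K _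
      rw [hp, Qb_succ K m q i p.2.1]
      rw [pow_succ, mul_inv]
      ring
    · rw [if_neg hp, if_neg (by rw [sub_add_cancel]; exact hp), map_zero, map_zero,
        smul_zero, add_zero]

def xAct : ExtAlg K m q →ₐ[K] Module.End K (Md K m) :=
  RingQuot.liftAlgHom K ⟨pAct K m q, pAct_rel K m q⟩

lemma xAct_xe (i : ZMod m) : xAct K m q (xe K m q i) = eAct K m i := by
  rw [xe, xAct, RingQuot.liftAlgHom_mkAlgHom_apply, pAct_pe]
lemma xAct_xa (i : ZMod m) : xAct K m q (xa K m q i) = aAct K m i := by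
  rw [xa, xAct, RingQuot.liftAlgHom_mkAlgHom_apply, pAct_pa]
lemma xAct_xb (i : ZMod m) : xAct K m q (xb K m q i) = bAct K m q i := by
  rw [xb, xAct, RingQuot.liftAlgHom_mkAlgHom_apply, pAct_pb]


lemma gam_apply (s : ℕ) : ∀ (i p : ZMod m) (s' t' : ℕ) (k : K),
    xAct K m q (gam K m q i s) (Finsupp.single (p, s', t') k) =
      if p = i + (s : ZMod m) then Finsupp.single (i, s + s', t') k else 0 := by
  induction s with
  | zero =>
    intro i p s' t' k
    show xAct K m q (xe K m q i) _ = _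
    rw [xAct_xe, eAct_single]
    simp only [Nat.cast_zero, add_zero, Nat.zero_add, zero_add]
    split
    · rename_i h; rw [h]
    · rfl
  | succ n ih =>
    intro i p s' t' k
    show xAct K m q (xa K m q i * gam K m q (i + 1) n) _ = _
    rw [map_mul, Module.End.mul_apply, ih, xAct_xa]
    by_cases hp : p = i + 1 + (n : ZMod m)
    · rw [if_pos hp, aAct_single,
        if_pos (show ((i:ZMod m) + 1, n + s', t').1 = i + 1 from rfl),
        if_pos (show p = i + ((n+1 : ℕ) : ZMod m) by rw [hp]; push_cast; ring)]
      simp only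
      rw [show (i : ZMod m) + 1 - 1 = i from add_sub_cancel_right i 1,
        show n + s' + 1 = n + 1 + s' by omega]
    · rw [if_neg hp, map_zero,
        if_neg (show ¬ p = i + ((n+1:ℕ) : ZMod m) by
          intro hc; exact hp (by rw [hc]; push_cast; ring))]

lemma del_apply0 (t : ℕ) : ∀ (j i' : ZMod m) (t' : ℕ) (k : K),
    xAct K m q (del K m q j t) (Finsupp.single (i', 0, t') k) =
      if j = i' then Finsupp.single (i' + (t : ZMod m), 0, t' + t) k else 0 := by
  induction t with
  | zero =>
    intro j i' t' k
    show xAct K m q (xe K m q j) _ = _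
    rw [xAct_xe, eAct_single]
    simp only [Nat.cast_zero, add_zero]
    by_cases h : j = i'
    · rw [if_pos (show ((i' : ZMod m), (0:ℕ), t').1 = j from h.symm), if_pos h]
    · rw [if_neg (fun hc => h (Eq.symm hc)), if_neg h]
  | succ n ih =>
    intro j i' t' k
    show xAct K m q (xb K m q (j + (n : ZMod m)) * del K m q j n) _ = _
    rw [map_mul, Module.End.mul_apply, ih, xAct_xb]
    by_cases h : j = i'
    · rw [if_pos h, bAct_single,
        if_pos (show (i' + (n : ZMod m), (0:ℕ), t' + n).1 = j + (n : ZMod m) by rw [h]),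
        if_pos h]
      simp only [pow_zero, one_mul]
      rw [show Qb K m q (i' + (n : ZMod m)) 0 = 1 from rfl, inv_one, one_smul,
        show i' + (n : ZMod m) + 1 = i' + ((n+1 : ℕ) : ZMod m) by push_cast; ring]
      rfl
    · rw [if_neg h, map_zero, if_neg h]

lemma del_apply1 (t : ℕ) : ∀ (j i' : ZMod m) (k : K),
    xAct K m q (del K m q j t) (Finsupp.single (i', 1, 0) k) =
      if j = i' then ((-1:K)^t * (Qb K m q i' t)⁻¹) •
        Finsupp.single (i' + (t : ZMod m), 1, t) k else 0 := by
  induction t with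
  | zero =>
    intro j i' k
    show xAct K m q (xe K m q j) _ = _
    rw [xAct_xe, eAct_single]
    simp only [Nat.cast_zero, add_zero, pow_zero]
    rw [show Qb K m q i' 0 = 1 from rfl, inv_one, mul_one, one_smul]
    by_cases h : j = i'
    · rw [if_pos (show ((i' : ZMod m), (1:ℕ), 0).1 = j from h.symm), if_pos h]
    · rw [if_neg (fun hc => h (Eq.symm hc)), if_neg h]
  | succ n ih =>
    intro j i' k
    show xAct K m q (xb K m q (j + (n : ZMod m)) * del K m q j n) _ = _
    rw [map_mul, Module.End.mul_apply, ih, xAct_xb]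
    by_cases h : j = i'
    · rw [if_pos h, map_smul, bAct_single,
        if_pos (show (i' + (n : ZMod m), (1:ℕ), n).1 = j + (n : ZMod m) by rw [h]),
        if_pos h]
      simp only [pow_one]
      rw [smul_smul]
      have h1 : (i' : ZMod m) + (n : ZMod m) + ((0 + 1 : ℕ) : ZMod m)
          = i' + ((n + 1 : ℕ) : ZMod m) := by push_cast; ring
      have h2 : Qb K m q i' (n + 1) = Qb K m q i' n * q (i' + ((n + 1 : ℕ) : ZMod m)) := by
        rw [Qb, Qb, Finset.prod_range_succ]
      have h3 : Qb K m q (i' + (n : ZMod m)) 1 = q (i' + ((n+1:ℕ) : ZMod m)) := by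
        rw [Qb, Finset.prod_range_one, h1]
      congr 1
      · rw [h3, h2, pow_succ, mul_inv]
        ring
      · rw [show i' + (n : ZMod m) + 1 = i' + ((n+1 : ℕ) : ZMod m) by push_cast; ring]
    · rw [if_neg h, map_zero, if_neg h]


lemma xe_xe (i : ZMod m) : xe K m q i * xe K m q i = xe K m q i := by
  have h1 : pe K m i * pe K m i = pe K m i := by
    rw [pe, ← map_mul]; exact RingQuot.mkAlgHom_rel K (PathRel.idem i)
  rw [xe, ← map_mul, h1]

lemma xa_xe (i : ZMod m) : xa K m q i * xe K m q (i + 1) = xa K m q i := by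
  have h1 : pa K m i * pe K m (i + 1) = pa K m i := by
    rw [pa, pe, ← map_mul]; exact RingQuot.mkAlgHom_rel K (PathRel.atgt i)
  rw [xa, xe, ← map_mul, h1]

lemma xe_xb (i : ZMod m) : xe K m q (i + 1) * xb K m q i = xb K m q i := by
  have h1 : pe K m (i + 1) * pb K m i = pb K m i := by
    rw [pb, pe, ← map_mul]; exact RingQuot.mkAlgHom_rel K (PathRel.bsrc i)
  rw [xb, xe, ← map_mul, h1]

lemma xb_xe (i : ZMod m) : xb K m q i * xe K m q i = xb K m q i := by
  have h1 : pb K m i * pe K m i = pb K m i := by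
    rw [pb, pe, ← map_mul]; exact RingQuot.mkAlgHom_rel K (PathRel.btgt i)
  rw [xb, xe, ← map_mul, h1]

lemma homog_xa (j : ZMod m) : Homog K m q 1 (xa K m q j) := by
  apply Submodule.subset_span
  refine ⟨j, j + 1, 1, 0, rfl, ?_⟩
  show xa K m q j = (xa K m q j * gam K m q (j+1) 0) * del K m q (j+1) 0
  show xa K m q j = (xa K m q j * xe K m q (j+1)) * xe K m q (j+1)
  rw [xa_xe, xa_xe]

lemma homog_xb (j : ZMod m) : Homog K m q 1 (xb K m q j) := by
  apply Submodule.subset_span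
  refine ⟨j + 1, j, 0, 1, rfl, ?_⟩
  show xb K m q j = xe K m q (j+1) * (xb K m q (j + ((0:ℕ) : ZMod m)) * del K m q j 0)
  rw [show ((0:ℕ) : ZMod m) = 0 from Nat.cast_zero, add_zero]
  show xb K m q j = xe K m q (j+1) * (xb K m q j * xe K m q j)
  rw [xb_xe, xe_xb]

lemma Qb_eq_Icc (j : ZMod m) (n : ℕ) :
    Qb K m q j n = ∏ k ∈ Finset.Icc 1 n, q (j + (k : ZMod m)) := by
  induction n with
  | zero =>
    rw [show Finset.Icc 1 0 = ∅ from Finset.Icc_eq_empty (by omega), Finset.prod_empty]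
    rfl
  | succ n ih =>
    rw [Qb, Finset.prod_range_succ, ← Qb, ih, Finset.prod_Icc_succ_top (by omega : 1 ≤ n + 1)]

end Machinery

/-- constraints on the coefficients of a nonzero bihomogeneous element
`z = Σ c_i γ_i^{s_i} δ_i^{t_i}` of `E(Λ_q)` that graded-commutes with all homogeneous
elements. -/
theorem graded_centre_coefficient_relations
    (K : Type) [Field K] (m : ℕ) [NeZero m] (hm : 1 ≤ m)
    (q : ZMod m → K) (hq : ∀ i, q i ≠ 0)
    (c : ZMod m → K) (s t : ZMod m → ℕ)
    (hmod : ∀ i : ZMod m, s i % m = t i % m)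
    (hsum : ∀ i : ZMod m, s i + t i = s 0 + t 0)
    (hdiff : ∀ i : ZMod m, (s i : ℤ) - (t i : ℤ) = (s 0 : ℤ) - (t 0 : ℤ))
    (hz : (∑ i : ZMod m, c i • (gam K m q i (s i) * del K m q i (t i))) ≠ 0)
    (hcomm : ∀ (n' : ℕ) (g : ExtAlg K m q), Homog K m q n' g →
      (∑ i : ZMod m, c i • (gam K m q i (s i) * del K m q i (t i))) * g =
        ((-1 : K) ^ ((s 0 + t 0) * n')) •
          (g * ∑ i : ZMod m, c i • (gam K m q i (s i) * del K m q i (t i)))) :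
    (∀ i : ZMod m, c i ≠ 0) ∧
    (∀ i : ZMod m, s i = s 0 ∧ t i = t 0) ∧
    (∀ j : ZMod m,
      c (j + 1) = (-1 : K) ^ (s 0) * (∏ k ∈ Finset.Icc 1 (t 0), q (j + (k : ZMod m)))⁻¹ * c j ∧
      c (j + 1) = (-1 : K) ^ (t 0) * (∏ k ∈ Finset.Icc 1 (s 0), q (j + (k : ZMod m)))⁻¹ * c j) ∧
    (∏ i : ZMod m, q i) ^ (t 0) = (-1 : K) ^ (m * s 0) ∧
    (∏ i : ZMod m, q i) ^ (s 0) = (-1 : K) ^ (m * t 0) := by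
  classical
  have hε : ((-1:K) ^ (s 0 + t 0)) ≠ 0 := pow_ne_zero _ (by norm_num)
  have hcast : ∀ i : ZMod m, ((s i : ℕ) : ZMod m) = ((t i : ℕ) : ZMod m) := fun i =>
    (ZMod.natCast_eq_natCast_iff' _ _ _).mpr (hmod i)
  have hQb : ∀ (j : ZMod m) (n : ℕ), Qb K m q j n ≠ 0 := fun j n =>
    Finset.prod_ne_zero_iff.mpr fun _ _ => hq _
  set Z := (∑ i : ZMod m, c i • (gam K m q i (s i) * del K m q i (t i))) with hZdef
  -- evaluation of Z on basis vectors
  have Zval : ∀ k : ZMod m, xAct K m q Z (Finsupp.single (k, 0, 0) (1:K))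
      = c k • Finsupp.single (k, s k, t k) (1:K) := by
    intro k
    rw [hZdef, map_sum, LinearMap.sum_apply]
    have hterm : ∀ i : ZMod m,
        (xAct K m q (c i • (gam K m q i (s i) * del K m q i (t i))))
          (Finsupp.single ((k : ZMod m), (0:ℕ), (0:ℕ)) (1:K)) =
        if i = k then c k • Finsupp.single (k, s k, t k) (1:K) else 0 := by
      intro i
      rw [map_smul, LinearMap.smul_apply, map_mul, Module.End.mul_apply, del_apply0]
      by_cases h : i = k
      · subst h
        rw [if_pos rfl, if_pos rfl, gam_apply,
          if_pos (show i + ((t i : ℕ) : ZMod m) = i + ((s i : ℕ) : ZMod m) by rw [hcast i]),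
          Nat.add_zero, Nat.zero_add]
      · rw [if_neg h, map_zero, smul_zero, if_neg h]
    rw [Finset.sum_congr rfl (fun i _ => hterm i), Finset.sum_ite_eq' Finset.univ k,
      if_pos (Finset.mem_univ k)]
  have Zval1 : ∀ j : ZMod m, xAct K m q Z (Finsupp.single (j, 1, 0) (1:K))
      = (c j * ((-1:K) ^ (t j) * (Qb K m q j (t j))⁻¹)) •
          Finsupp.single (j, s j + 1, t j) (1:K) := by
    intro j
    rw [hZdef, map_sum, LinearMap.sum_apply]
    have hterm : ∀ i : ZMod m,
        (xAct K m q (c i • (gam K m q i (s i) * del K m q i (t i))))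
          (Finsupp.single ((j : ZMod m), (1:ℕ), (0:ℕ)) (1:K)) =
        if i = j then (c j * ((-1:K) ^ (t j) * (Qb K m q j (t j))⁻¹)) •
          Finsupp.single (j, s j + 1, t j) (1:K) else 0 := by
      intro i
      rw [map_smul, LinearMap.smul_apply, map_mul, Module.End.mul_apply, del_apply1]
      by_cases h : i = j
      · subst h
        rw [if_pos rfl, if_pos rfl, map_smul, gam_apply,
          if_pos (show i + ((t i : ℕ) : ZMod m) = i + ((s i : ℕ) : ZMod m) by rw [hcast i]),
          smul_smul]
      · rw [if_neg h, map_zero, smul_zero, if_neg h]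
    rw [Finset.sum_congr rfl (fun i _ => hterm i), Finset.sum_ite_eq' Finset.univ j,
      if_pos (Finset.mem_univ j)]
  have Zval01 : ∀ j : ZMod m, xAct K m q Z (Finsupp.single (j, 0, 1) (1:K))
      = c j • Finsupp.single (j, s j, 1 + t j) (1:K) := by
    intro j
    rw [hZdef, map_sum, LinearMap.sum_apply]
    have hterm : ∀ i : ZMod m,
        (xAct K m q (c i • (gam K m q i (s i) * del K m q i (t i))))
          (Finsupp.single ((j : ZMod m), (0:ℕ), (1:ℕ)) (1:K)) =
        if i = j then c j • Finsupp.single (j, s j, 1 + t j) (1:K) else 0 := by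
      intro i
      rw [map_smul, LinearMap.smul_apply, map_mul, Module.End.mul_apply, del_apply0]
      by_cases h : i = j
      · subst h
        rw [if_pos rfl, if_pos rfl, gam_apply,
          if_pos (show i + ((t i : ℕ) : ZMod m) = i + ((s i : ℕ) : ZMod m) by rw [hcast i]),
          Nat.add_zero]
      · rw [if_neg h, map_zero, smul_zero, if_neg h]
    rw [Finset.sum_congr rfl (fun i _ => hterm i), Finset.sum_ite_eq' Finset.univ j,
      if_pos (Finset.mem_univ j)]
  -- key equations from graded commutation with a_j and ā_j
  have keyA : ∀ j : ZMod m,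
      Finsupp.single ((j : ZMod m), s j + 1, t j)
          (c j * ((-1:K) ^ (t j) * (Qb K m q j (t j))⁻¹))
        = Finsupp.single ((j : ZMod m), s (j+1) + 1, t (j+1))
            ((-1:K) ^ (s 0 + t 0) * c (j+1)) := by
    intro j
    have h := hcomm 1 (xa K m q j) (homog_xa K m q j)
    rw [mul_one] at h
    have h2 := DFunLike.congr_fun (congrArg (xAct K m q) h)
      (Finsupp.single ((j + 1 : ZMod m), (0:ℕ), (0:ℕ)) (1:K))
    rw [map_mul, Module.End.mul_apply, xAct_xa, aAct_single,
      if_pos (show ((j + 1 : ZMod m), (0:ℕ), (0:ℕ)).1 = j + 1 from rfl)] at h2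
    simp only [add_sub_cancel_right] at h2
    rw [map_smul, LinearMap.smul_apply, map_mul, Module.End.mul_apply, Zval, Zval1,
      map_smul, xAct_xa, aAct_single,
      if_pos (show ((j + 1 : ZMod m), s (j+1), t (j+1)).1 = j + 1 from rfl)] at h2
    simp only [add_sub_cancel_right] at h2
    rw [smul_smul, Finsupp.smul_single', mul_one, Finsupp.smul_single', mul_one] at h2
    exact h2
  have keyB : ∀ j : ZMod m,
      Finsupp.single ((j + 1 : ZMod m), s (j+1), 1 + t (j+1)) (c (j+1))
        = Finsupp.single ((j + 1 : ZMod m), s j, t j + 1)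
            ((-1:K) ^ (s 0 + t 0) * (c j * ((-1:K) ^ (s j) * (Qb K m q j (s j))⁻¹))) := by
    intro j
    have h := hcomm 1 (xb K m q j) (homog_xb K m q j)
    rw [mul_one] at h
    have h2 := DFunLike.congr_fun (congrArg (xAct K m q) h)
      (Finsupp.single ((j : ZMod m), (0:ℕ), (0:ℕ)) (1:K))
    rw [map_mul, Module.End.mul_apply, xAct_xb, bAct_single,
      if_pos (show ((j : ZMod m), (0:ℕ), (0:ℕ)).1 = j from rfl)] at h2
    simp only [pow_zero, one_mul] at h2
    rw [show Qb K m q j 0 = 1 from rfl, inv_one, one_smul] at h2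
    rw [Zval01, map_smul, LinearMap.smul_apply, map_mul, Module.End.mul_apply, Zval,
      map_smul, xAct_xb, bAct_single,
      if_pos (show ((j : ZMod m), s j, t j).1 = j from rfl)] at h2
    rw [smul_smul, smul_smul, Finsupp.smul_single', mul_one, Finsupp.smul_single',
      mul_one] at h2
    simpa only [mul_assoc] using h2
  -- propagation of nonvanishing
  have hstep : ∀ j : ZMod m, c j ≠ 0 →
      c (j+1) ≠ 0 ∧ s (j+1) = s j ∧ t (j+1) = t j := by
    intro j hcj
    have hcoefL : c j * ((-1:K) ^ (t j) * (Qb K m q j (t j))⁻¹) ≠ 0 :=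
      mul_ne_zero hcj (mul_ne_zero (pow_ne_zero _ (by norm_num)) (inv_ne_zero (hQb _ _)))
    rcases (Finsupp.single_eq_single_iff _ _ _ _).mp (keyA j) with ⟨hidx, hco⟩ | ⟨h1, _⟩
    · obtain ⟨hs, ht⟩ : s j + 1 = s (j+1) + 1 ∧ t j = t (j+1) := by
        simpa [Prod.ext_iff] using hidx
      refine ⟨?_, by omega, ht.symm⟩
      intro h0
      rw [h0, mul_zero] at hco
      exact hcoefL hco
    · exact absurd h1 hcoefL
  have hex : ∃ i0 : ZMod m, c i0 ≠ 0 := by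
    by_contra hno; push_neg at hno
    exact hz (Finset.sum_eq_zero fun i _ => by rw [hno i, zero_smul])
  obtain ⟨i0, hi0⟩ := hex
  have hchain : ∀ n : ℕ, c (i0 + n) ≠ 0 ∧ s (i0 + n) = s i0 ∧ t (i0 + n) = t i0 := by
    intro n
    induction n with
    | zero => rw [Nat.cast_zero, add_zero]; exact ⟨hi0, rfl, rfl⟩
    | succ n ih =>
      have hst := hstep (i0 + n) ih.1
      have hcasteq : i0 + ((n+1 : ℕ) : ZMod m) = (i0 + (n : ZMod m)) + 1 := by
        push_cast; ring
      rw [hcasteq]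
      exact ⟨hst.1, hst.2.1.trans ih.2.1, hst.2.2.trans ih.2.2⟩
  have hall : ∀ i : ZMod m, c i ≠ 0 ∧ s i = s i0 ∧ t i = t i0 := by
    intro i
    have hrep : i0 + (((i - i0).val : ℕ) : ZMod m) = i := by
      rw [ZMod.natCast_rightInverse (i - i0)]; ring
    rw [← hrep]
    exact hchain _
  have hc : ∀ i : ZMod m, c i ≠ 0 := fun i => (hall i).1
  have hs0 : ∀ i : ZMod m, s i = s 0 := fun i => (hall i).2.1.trans (hall 0).2.1.symm
  have ht0 : ∀ i : ZMod m, t i = t 0 := fun i => (hall i).2.2.trans (hall 0).2.2.symm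
  -- coefficient recursions
  have relA : ∀ j : ZMod m, c (j+1) = (-1:K) ^ (s 0) * (Qb K m q j (t 0))⁻¹ * c j := by
    intro j
    have hA := keyA j
    rw [hs0 (j+1), hs0 j, ht0 (j+1), ht0 j] at hA
    have hco : c j * ((-1:K) ^ (t 0) * (Qb K m q j (t 0))⁻¹)
        = (-1:K) ^ (s 0 + t 0) * c (j+1) := by
      rcases (Finsupp.single_eq_single_iff _ _ _ _).mp hA with ⟨_, h⟩ | ⟨h1, _⟩
      · exact h
      · exact absurd h1 (mul_ne_zero (hc j)
          (mul_ne_zero (pow_ne_zero _ (by norm_num)) (inv_ne_zero (hQb _ _))))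
    have hpow2 : ((-1:K)) ^ (s 0 + t 0) * (-1:K) ^ (s 0) = (-1:K) ^ (t 0) := by
      rw [← pow_add, show s 0 + t 0 + s 0 = t 0 + 2 * (s 0) by ring,
        pow_add, pow_mul, neg_one_sq, one_pow, mul_one]
    apply mul_left_cancel₀ hε
    rw [← hco]
    linear_combination (-(c j * (Qb K m q j (t 0))⁻¹)) * hpow2
  have relB : ∀ j : ZMod m, c (j+1) = (-1:K) ^ (t 0) * (Qb K m q j (s 0))⁻¹ * c j := by
    intro j
    have hB := keyB j
    rw [hs0 (j+1), hs0 j, ht0 (j+1), ht0 j] at hB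
    have hco : c (j+1)
        = (-1:K) ^ (s 0 + t 0) * (c j * ((-1:K) ^ (s 0) * (Qb K m q j (s 0))⁻¹)) := by
      rcases (Finsupp.single_eq_single_iff _ _ _ _).mp hB with ⟨_, h⟩ | ⟨h1, _⟩
      · exact h
      · exact absurd h1 (hc (j+1))
    have hpow2 : ((-1:K)) ^ (s 0 + t 0) * (-1:K) ^ (s 0) = (-1:K) ^ (t 0) := by
      rw [← pow_add, show s 0 + t 0 + s 0 = t 0 + 2 * (s 0) by ring,
        pow_add, pow_mul, neg_one_sq, one_pow, mul_one]
    rw [hco]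
    linear_combination (c j * (Qb K m q j (s 0))⁻¹) * hpow2
  -- global product identities
  have prodc_ne : (∏ j : ZMod m, c j) ≠ 0 := Finset.prod_ne_zero_iff.mpr fun i _ => hc i
  have hshift : (∏ j : ZMod m, c (j + 1)) = ∏ j : ZMod m, c j :=
    Fintype.prod_equiv (Equiv.addRight (1 : ZMod m)) _ _ (fun x => rfl)
  have hQprod : ∀ n : ℕ, (∏ j : ZMod m, Qb K m q j n) = (∏ i : ZMod m, q i) ^ n := by
    intro n
    have h1 : (∏ j : ZMod m, Qb K m q j n)
        = ∏ j : ZMod m, ∏ l ∈ Finset.range n, q (j + ((l+1:ℕ) : ZMod m)) := rfl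
    rw [h1, Finset.prod_comm]
    have h2 : ∀ l : ℕ, (∏ j : ZMod m, q (j + ((l+1:ℕ) : ZMod m))) = ∏ i : ZMod m, q i :=
      fun l => Fintype.prod_equiv (Equiv.addRight (((l+1:ℕ) : ZMod m))) _ _ (fun x => rfl)
    rw [Finset.prod_congr rfl (fun l _ => h2 l), Finset.prod_const, Finset.card_range]
  have prodq_ne : ∀ n : ℕ, ((∏ i : ZMod m, q i) ^ n) ≠ 0 :=
    fun n => pow_ne_zero _ (Finset.prod_ne_zero_iff.mpr fun i _ => hq i)
  have main : ∀ (S T : ℕ), (∀ j : ZMod m, c (j+1) = (-1:K) ^ S * (Qb K m q j T)⁻¹ * c j) →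
      (∏ i : ZMod m, q i) ^ T = (-1:K) ^ (m * S) := by
    intro S T hrel
    have H : (∏ j : ZMod m, c (j+1))
        = ∏ j : ZMod m, ((-1:K) ^ S * (Qb K m q j T)⁻¹ * c j) :=
      Finset.prod_congr rfl fun j _ => hrel j
    rw [hshift, Finset.prod_mul_distrib, Finset.prod_mul_distrib, Finset.prod_const] at H
    have H2 : ((-1:K) ^ S) ^ (Fintype.card (ZMod m))
        * (∏ j : ZMod m, (Qb K m q j T)⁻¹) = 1 :=
      mul_right_cancel₀ prodc_ne (by rw [one_mul]; exact H.symm)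
    rw [Finset.prod_inv_distrib, hQprod, ZMod.card] at H2
    have H3 := (mul_inv_eq_one₀ (prodq_ne T)).mp H2
    rw [← H3, ← pow_mul, mul_comm S m]
  refine ⟨hc, fun i => ⟨hs0 i, ht0 i⟩, fun j => ⟨?_, ?_⟩, ?_, ?_⟩
  · rw [relA j, Qb_eq_Icc]
  · rw [relB j, Qb_eq_Icc]
  · exact main (s 0) (t 0) relA
  · exact main (t 0) (s 0) relB
end
end
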